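/- arXiv:2110.03438 — 12 statements merged into one kernel-verified Lean document; each statement's English description precedes it below -/
import Mathlib

section
/- Under the stated ODE system, on all of I one has f_2 = T' + 3λ^2 - (n-1)c and f_3 = (1/2)T'' - (λ^2 + c)T + 6λλ'. -/
open scoped BigOperators

/-- Part of Lemma 2.2: formulas for f₂ and f₃. -/
theorem stmt_2 (n : ℕ) (hn : 2 ≤ n) (c R : ℝ) (a b : ℝ) (hab : a < b)
    (lam : ℝ → ℝ) (lami omega : ℕ → ℝ → ℝ)
    (hlam : ContDiffOn ℝ (⊤ : ℕ∞) lam (Set.Ioo a b))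
    (hlami : ∀ i ∈ Finset.Icc 2 n, ContDiffOn ℝ (⊤ : ℕ∞) (lami i) (Set.Ioo a b))
    (homega : ∀ i ∈ Finset.Icc 2 n, ContDiffOn ℝ (⊤ : ℕ∞) (omega i) (Set.Ioo a b))
    (hode1 : ∀ i ∈ Finset.Icc 2 n, ∀ x ∈ Set.Ioo a b,
      deriv (lami i) x = (lami i x - lam x) * omega i x)
    (hode2 : ∀ i ∈ Finset.Icc 2 n, ∀ x ∈ Set.Ioo a b,
      deriv (omega i) x = omega i x ^ 2 + lam x * lami i x + c)
    (hsum1 : ∀ x ∈ Set.Ioo a b, ∑ i ∈ Finset.Icc 2 n, lami i x = -3 * lam x)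
    (hsum2 : ∀ x ∈ Set.Ioo a b, ∑ i ∈ Finset.Icc 2 n, lami i x ^ 2 =
      (n : ℝ) * ((n : ℝ) - 1) * c + 3 * lam x ^ 2 - R)
    (T : ℝ → ℝ) (hT : T = fun x => ∑ i ∈ Finset.Icc 2 n, omega i x) :
    ∀ x ∈ Set.Ioo a b,
      (∑ i ∈ Finset.Icc 2 n, omega i x ^ 2 =
        deriv T x + 3 * lam x ^ 2 - ((n : ℝ) - 1) * c) ∧
      (∑ i ∈ Finset.Icc 2 n, omega i x ^ 3 =
        (1 / 2) * deriv (deriv T) x - (lam x ^ 2 + c) * T x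
          + 6 * lam x * deriv lam x) := by
  intro x hx
  have hopen : Set.Ioo a b ∈ nhds x := isOpen_Ioo.mem_nhds hx
  have hdlam : ∀ y ∈ Set.Ioo a b, DifferentiableAt ℝ lam y := fun y hy =>
    (hlam.contDiffAt (isOpen_Ioo.mem_nhds hy)).differentiableAt (by simp)
  have hdo : ∀ i ∈ Finset.Icc 2 n, ∀ y ∈ Set.Ioo a b, DifferentiableAt ℝ (omega i) y :=
    fun i hi y hy =>
      ((homega i hi).contDiffAt (isOpen_Ioo.mem_nhds hy)).differentiableAt (by simp)
  have hdl : ∀ i ∈ Finset.Icc 2 n, ∀ y ∈ Set.Ioo a b, DifferentiableAt ℝ (lami i) y :=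
    fun i hi y hy =>
      ((hlami i hi).contDiffAt (isOpen_Ioo.mem_nhds hy)).differentiableAt (by simp)
  have hcardn : (Finset.Icc 2 n).card = n - 1 := by rw [Nat.card_Icc]; omega
  have hcard : ((Finset.Icc 2 n).card : ℝ) = (n : ℝ) - 1 := by
    rw [hcardn, Nat.cast_sub (by omega : 1 ≤ n), Nat.cast_one]
  have hTd : ∀ y ∈ Set.Ioo a b, deriv T y
      = ∑ i ∈ Finset.Icc 2 n, (omega i y ^ 2 + lam y * lami i y + c) := by
    intro y hy
    rw [hT, deriv_fun_sum (fun i hi => hdo i hi y hy)]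
    exact Finset.sum_congr rfl fun i hi => hode2 i hi y hy
  have hf2 : ∑ i ∈ Finset.Icc 2 n, omega i x ^ 2
      = deriv T x + 3 * lam x ^ 2 - ((n : ℝ) - 1) * c := by
    rw [hTd x hx, Finset.sum_add_distrib, Finset.sum_add_distrib, ← Finset.mul_sum,
      hsum1 x hx, Finset.sum_const, nsmul_eq_mul, hcard]
    ring
  refine ⟨hf2, ?_⟩
  have hg : deriv (deriv T) x
      = ∑ i ∈ Finset.Icc 2 n, deriv (fun y => omega i y ^ 2 + lam y * lami i y + c) x := by
    have heq : deriv T =ᶠ[nhds x]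
        (fun y => ∑ i ∈ Finset.Icc 2 n, (omega i y ^ 2 + lam y * lami i y + c)) :=
      Filter.eventuallyEq_of_mem hopen hTd
    rw [heq.deriv_eq]
    exact deriv_fun_sum fun i hi =>
      (((hdo i hi x hx).pow 2).add ((hdlam x hx).mul (hdl i hi x hx))).add
        (differentiableAt_const c)
  have hterm : ∀ i ∈ Finset.Icc 2 n,
      deriv (fun y => omega i y ^ 2 + lam y * lami i y + c) x
        = 2 * omega i x * deriv (omega i) x
          + (deriv lam x * lami i x + lam x * deriv (lami i) x) := by
    intro i hi
    have h1 := (((hdo i hi x hx).hasDerivAt.pow 2).add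
      ((hdlam x hx).hasDerivAt.mul (hdl i hi x hx).hasDerivAt)).add_const c
    have := h1.deriv
    simpa using this
  have hsumd : ∑ i ∈ Finset.Icc 2 n, deriv (lami i) x = -3 * deriv lam x := by
    have heq : (fun y => ∑ i ∈ Finset.Icc 2 n, lami i y) =ᶠ[nhds x]
        (fun y => -3 * lam y) := Filter.eventuallyEq_of_mem hopen hsum1
    have h2 := heq.deriv_eq
    rw [deriv_fun_sum (fun i hi => hdl i hi x hx)] at h2
    rw [h2, deriv_const_mul _ (hdlam x hx)]
  have hS : ∑ i ∈ Finset.Icc 2 n, lami i x * omega i x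
      = lam x * T x - 3 * deriv lam x := by
    have h1 : ∑ i ∈ Finset.Icc 2 n, deriv (lami i) x
        = ∑ i ∈ Finset.Icc 2 n, (lami i x - lam x) * omega i x :=
      Finset.sum_congr rfl fun i hi => hode1 i hi x hx
    rw [hsumd] at h1
    have h2 : ∑ i ∈ Finset.Icc 2 n, (lami i x - lam x) * omega i x
        = (∑ i ∈ Finset.Icc 2 n, lami i x * omega i x) - lam x * T x := by
      rw [hT, Finset.mul_sum, ← Finset.sum_sub_distrib]
      exact Finset.sum_congr rfl fun i hi => by ring
    rw [h2] at h1
    linarith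
  have key : deriv (deriv T) x
      = 2 * (∑ i ∈ Finset.Icc 2 n, omega i x ^ 3)
        + 2 * lam x * (∑ i ∈ Finset.Icc 2 n, lami i x * omega i x)
        + 2 * c * T x
        + deriv lam x * (∑ i ∈ Finset.Icc 2 n, lami i x)
        + lam x * (∑ i ∈ Finset.Icc 2 n, deriv (lami i) x) := by
    rw [hg, Finset.sum_congr rfl hterm, hT]
    simp only [Finset.mul_sum]
    rw [← Finset.sum_add_distrib, ← Finset.sum_add_distrib, ← Finset.sum_add_distrib,
      ← Finset.sum_add_distrib]
    refine Finset.sum_congr rfl fun i hi => ?_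
    rw [hode2 i hi x hx]
    ring
  rw [hS, hsum1 x hx, hsumd] at key
  linarith [key]
end

section
/- Under the stated ODE system, on all of I one has f_4 = (1/6)T''' - (4/3)(λ^2 + c)T' - (7/6)λλ'T + 2(λ')^2 + (7/2)λλ'' + ((n^2 - 10)/2)cλ^2 - (1/2)Rλ^2 + (n-1)c^2. -/
open scoped BigOperators

private theorem hasDerivAt_congr_d {f : ℝ → ℝ} {d d' x : ℝ} (h : HasDerivAt f d x)
    (hd : d = d') : HasDerivAt f d' x := hd ▸ h

private theorem sum_split (u : Finset ℕ) (f g : ℕ → ℝ) (p q r s t v w z : ℝ) :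
    ∑ i ∈ u, (p * f i ^ 4 + q * (g i * f i ^ 2) + r * f i ^ 2 + s * (g i * f i)
      + t * g i ^ 2 + v * g i + w * f i + z)
    = p * (∑ i ∈ u, f i ^ 4) + q * (∑ i ∈ u, g i * f i ^ 2) + r * (∑ i ∈ u, f i ^ 2)
      + s * (∑ i ∈ u, g i * f i) + t * (∑ i ∈ u, g i ^ 2) + v * (∑ i ∈ u, g i)
      + w * (∑ i ∈ u, f i) + (u.card : ℝ) * z := by
  simp only [Finset.sum_add_distrib, ← Finset.mul_sum, Finset.sum_const, nsmul_eq_mul]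

private theorem sum_split' (u : Finset ℕ) (f g F : ℕ → ℝ) (p q r s t v w z : ℝ)
    (hF : ∀ i ∈ u, F i = p * f i ^ 4 + q * (g i * f i ^ 2) + r * f i ^ 2 + s * (g i * f i)
      + t * g i ^ 2 + v * g i + w * f i + z) :
    ∑ i ∈ u, F i
    = p * (∑ i ∈ u, f i ^ 4) + q * (∑ i ∈ u, g i * f i ^ 2) + r * (∑ i ∈ u, f i ^ 2)
      + s * (∑ i ∈ u, g i * f i) + t * (∑ i ∈ u, g i ^ 2) + v * (∑ i ∈ u, g i)
      + w * (∑ i ∈ u, f i) + (u.card : ℝ) * z := by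
  rw [Finset.sum_congr rfl hF]; exact sum_split u f g p q r s t v w z

/-- Part of Lemma 2.2: formula for f₄. -/
theorem stmt_3 (n : ℕ) (hn : 2 ≤ n) (c R : ℝ) (a b : ℝ) (hab : a < b)
    (lam : ℝ → ℝ) (lami omega : ℕ → ℝ → ℝ)
    (hlam : ContDiffOn ℝ (⊤ : ℕ∞) lam (Set.Ioo a b))
    (hlami : ∀ i ∈ Finset.Icc 2 n, ContDiffOn ℝ (⊤ : ℕ∞) (lami i) (Set.Ioo a b))
    (homega : ∀ i ∈ Finset.Icc 2 n, ContDiffOn ℝ (⊤ : ℕ∞) (omega i) (Set.Ioo a b))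
    (hode1 : ∀ i ∈ Finset.Icc 2 n, ∀ x ∈ Set.Ioo a b,
      deriv (lami i) x = (lami i x - lam x) * omega i x)
    (hode2 : ∀ i ∈ Finset.Icc 2 n, ∀ x ∈ Set.Ioo a b,
      deriv (omega i) x = omega i x ^ 2 + lam x * lami i x + c)
    (hsum1 : ∀ x ∈ Set.Ioo a b, ∑ i ∈ Finset.Icc 2 n, lami i x = -3 * lam x)
    (hsum2 : ∀ x ∈ Set.Ioo a b, ∑ i ∈ Finset.Icc 2 n, lami i x ^ 2 =
      (n : ℝ) * ((n : ℝ) - 1) * c + 3 * lam x ^ 2 - R)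
    (T : ℝ → ℝ) (hT : T = fun x => ∑ i ∈ Finset.Icc 2 n, omega i x) :
    ∀ x ∈ Set.Ioo a b,
      ∑ i ∈ Finset.Icc 2 n, omega i x ^ 4 =
        (1 / 6) * deriv (deriv (deriv T)) x
          - (4 / 3) * (lam x ^ 2 + c) * deriv T x
          - (7 / 6) * lam x * deriv lam x * T x
          + 2 * deriv lam x ^ 2
          + (7 / 2) * lam x * deriv (deriv lam) x
          + (((n : ℝ) ^ 2 - 10) / 2) * c * lam x ^ 2
          - (1 / 2) * R * lam x ^ 2 + ((n : ℝ) - 1) * c ^ 2 := by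
  have hs : IsOpen (Set.Ioo a b) := isOpen_Ioo
  have hdl : ∀ y ∈ Set.Ioo a b, DifferentiableAt ℝ lam y := fun y hy =>
    (hlam.differentiableOn (by simp)).differentiableAt (hs.mem_nhds hy)
  have hlam' : ContDiffOn ℝ (⊤ : ℕ∞) (deriv lam) (Set.Ioo a b) := hlam.deriv_of_isOpen hs (by simp)
  have hdl' : ∀ y ∈ Set.Ioo a b, DifferentiableAt ℝ (deriv lam) y := fun y hy =>
    (hlam'.differentiableOn (by simp)).differentiableAt (hs.mem_nhds hy)
  have hdo : ∀ i ∈ Finset.Icc 2 n, ∀ y ∈ Set.Ioo a b, DifferentiableAt ℝ (omega i) y :=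
    fun i hi y hy => ((homega i hi).differentiableOn (by simp)).differentiableAt (hs.mem_nhds hy)
  have hdli : ∀ i ∈ Finset.Icc 2 n, ∀ y ∈ Set.Ioo a b, DifferentiableAt ℝ (lami i) y :=
    fun i hi y hy => ((hlami i hi).differentiableOn (by simp)).differentiableAt (hs.mem_nhds hy)
  have Hlam : ∀ y ∈ Set.Ioo a b, HasDerivAt lam (deriv lam y) y := fun y hy =>
    (hdl y hy).hasDerivAt
  have Hlam' : ∀ y ∈ Set.Ioo a b, HasDerivAt (deriv lam) (deriv (deriv lam) y) y := fun y hy =>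
    (hdl' y hy).hasDerivAt
  have Hω : ∀ i ∈ Finset.Icc 2 n, ∀ y ∈ Set.Ioo a b,
      HasDerivAt (omega i) (omega i y ^ 2 + lam y * lami i y + c) y := by
    intro i hi y hy
    have h := (hdo i hi y hy).hasDerivAt
    rwa [hode2 i hi y hy] at h
  have Hli : ∀ i ∈ Finset.Icc 2 n, ∀ y ∈ Set.Ioo a b,
      HasDerivAt (lami i) ((lami i y - lam y) * omega i y) y := by
    intro i hi y hy
    have h := (hdli i hi y hy).hasDerivAt
    rwa [hode1 i hi y hy] at h
  -- first derivative of T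
  have hT1 : ∀ y ∈ Set.Ioo a b, deriv T y
      = ∑ i ∈ Finset.Icc 2 n, (omega i y * omega i y + lam y * lami i y + c) := by
    intro y hy
    rw [hT, deriv_fun_sum fun i hi => hdo i hi y hy]
    refine Finset.sum_congr rfl fun i hi => ?_
    rw [hode2 i hi y hy]; ring
  -- second derivative of T
  have hT2 : ∀ y ∈ Set.Ioo a b, deriv (deriv T) y
      = ∑ i ∈ Finset.Icc 2 n, (2 * (omega i y * (omega i y * omega i y))
          + 3 * (lam y * (lami i y * omega i y)) + 2 * c * omega i y
          + deriv lam y * lami i y - lam y * (lam y * omega i y)) := by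
    intro y hy
    have hev : deriv T =ᶠ[nhds y]
        fun z => ∑ i ∈ Finset.Icc 2 n, (omega i z * omega i z + lam z * lami i z + c) :=
      Filter.eventuallyEq_of_mem (hs.mem_nhds hy) fun z hz => hT1 z hz
    rw [hev.deriv_eq]
    refine (HasDerivAt.fun_sum fun i hi => ?_).deriv
    exact hasDerivAt_congr_d
      ((((Hω i hi y hy).mul (Hω i hi y hy)).add ((Hlam y hy).mul (Hli i hi y hy))).add_const c)
      (by ring)
  intro x hx
  -- third derivative of T at x
  have hT3 : deriv (deriv (deriv T)) x
      = ∑ i ∈ Finset.Icc 2 n, (6 * omega i x ^ 4 + (12 * lam x) * (lami i x * omega i x ^ 2)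
          + (8 * c - 4 * lam x ^ 2) * omega i x ^ 2
          + (4 * deriv lam x) * (lami i x * omega i x)
          + (3 * lam x ^ 2) * lami i x ^ 2
          + (5 * c * lam x + deriv (deriv lam) x - lam x ^ 3) * lami i x
          + (-(3 * lam x * deriv lam x)) * omega i x + (2 * c ^ 2 - c * lam x ^ 2)) := by
    have hev : deriv (deriv T) =ᶠ[nhds x]
        fun z => ∑ i ∈ Finset.Icc 2 n, (2 * (omega i z * (omega i z * omega i z))
          + 3 * (lam z * (lami i z * omega i z)) + 2 * c * omega i z
          + deriv lam z * lami i z - lam z * (lam z * omega i z)) :=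
      Filter.eventuallyEq_of_mem (hs.mem_nhds hx) fun z hz => hT2 z hz
    rw [hev.deriv_eq]
    refine (HasDerivAt.fun_sum fun i hi => ?_).deriv
    exact hasDerivAt_congr_d
      (((((((Hω i hi x hx).mul ((Hω i hi x hx).mul (Hω i hi x hx))).const_mul 2).add
        (((Hlam x hx).mul ((Hli i hi x hx).mul (Hω i hi x hx))).const_mul 3)).add
        ((Hω i hi x hx).const_mul (2 * c))).add
        ((Hlam' x hx).mul (Hli i hi x hx))).sub
        ((Hlam x hx).mul ((Hlam x hx).mul (Hω i hi x hx))))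
      (by simp only [Pi.mul_apply]; ring)
  have hcard : ((Finset.Icc 2 n).card : ℝ) = (n : ℝ) - 1 := by
    rw [Nat.card_Icc]
    have h1 : n + 1 - 2 = n - 1 := by omega
    rw [h1, Nat.cast_sub (by omega : 1 ≤ n)]
    simp
  -- equation A
  have hA : deriv (deriv (deriv T)) x
      = 6 * (∑ i ∈ Finset.Icc 2 n, omega i x ^ 4)
        + 12 * lam x * (∑ i ∈ Finset.Icc 2 n, lami i x * omega i x ^ 2)
        + (8 * c - 4 * lam x ^ 2) * (∑ i ∈ Finset.Icc 2 n, omega i x ^ 2)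
        + 4 * deriv lam x * (∑ i ∈ Finset.Icc 2 n, lami i x * omega i x)
        + 3 * lam x ^ 2 * (∑ i ∈ Finset.Icc 2 n, lami i x ^ 2)
        + (5 * c * lam x + deriv (deriv lam) x - lam x ^ 3) * (∑ i ∈ Finset.Icc 2 n, lami i x)
        - 3 * lam x * deriv lam x * (∑ i ∈ Finset.Icc 2 n, omega i x)
        + ((n : ℝ) - 1) * (2 * c ^ 2 - c * lam x ^ 2) := by
    refine hT3.trans ((sum_split' (Finset.Icc 2 n) (fun i => omega i x) (fun i => lami i x) _
      6 (12 * lam x) (8 * c - 4 * lam x ^ 2) (4 * deriv lam x) (3 * lam x ^ 2)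
      (5 * c * lam x + deriv (deriv lam) x - lam x ^ 3) (-(3 * lam x * deriv lam x))
      (2 * c ^ 2 - c * lam x ^ 2) (fun i _ => by ring)).trans ?_)
    rw [hcard]; ring
  -- equation C
  have hC : deriv T x = (∑ i ∈ Finset.Icc 2 n, omega i x ^ 2)
      + lam x * (∑ i ∈ Finset.Icc 2 n, lami i x) + ((n : ℝ) - 1) * c := by
    refine (hT1 x hx).trans ((sum_split' (Finset.Icc 2 n) (fun i => omega i x)
      (fun i => lami i x) _ 0 0 1 0 0 (lam x) 0 c (fun i _ => by ring)).trans ?_)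
    rw [hcard]; ring
  -- derivative of sum1
  have hsum1' : ∀ y ∈ Set.Ioo a b,
      ∑ i ∈ Finset.Icc 2 n, deriv (lami i) y = -3 * deriv lam y := by
    intro y hy
    have hev : (fun z => ∑ i ∈ Finset.Icc 2 n, lami i z) =ᶠ[nhds y] fun z => -3 * lam z :=
      Filter.eventuallyEq_of_mem (hs.mem_nhds hy) fun z hz => hsum1 z hz
    have h1 := hev.deriv_eq
    rw [deriv_fun_sum fun i hi => hdli i hi y hy] at h1
    rw [h1]
    exact deriv_const_mul (-3) (hdl y hy)
  -- key identity for S1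
  have hDall : ∀ y ∈ Set.Ioo a b,
      ∑ i ∈ Finset.Icc 2 n, lami i y * omega i y = lam y * T y - 3 * deriv lam y := by
    intro y hy
    have h2 : ∑ i ∈ Finset.Icc 2 n, (lami i y - lam y) * omega i y = -3 * deriv lam y := by
      rw [← hsum1' y hy]
      exact Finset.sum_congr rfl fun i hi => (hode1 i hi y hy).symm
    have h3 : ∑ i ∈ Finset.Icc 2 n, (lami i y - lam y) * omega i y
        = (∑ i ∈ Finset.Icc 2 n, lami i y * omega i y)
          - lam y * ∑ i ∈ Finset.Icc 2 n, omega i y := by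
      rw [Finset.mul_sum, ← Finset.sum_sub_distrib]
      exact Finset.sum_congr rfl fun i _ => by ring
    simp only [hT]
    linarith [h2, h3.symm.trans h2]
  -- equation B
  have hB : 2 * (∑ i ∈ Finset.Icc 2 n, lami i x * omega i x ^ 2)
      - lam x * (∑ i ∈ Finset.Icc 2 n, omega i x ^ 2)
      + lam x * (∑ i ∈ Finset.Icc 2 n, lami i x ^ 2)
      + c * (∑ i ∈ Finset.Icc 2 n, lami i x)
      = deriv lam x * T x + lam x * deriv T x - 3 * deriv (deriv lam) x := by
    have hTdiff : DifferentiableAt ℝ T x := by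
      rw [hT]
      exact (HasDerivAt.fun_sum fun i hi => Hω i hi x hx).differentiableAt
    have HT : HasDerivAt T (deriv T x) x := hTdiff.hasDerivAt
    have Hσ : HasDerivAt (fun z => ∑ i ∈ Finset.Icc 2 n, lami i z * omega i z)
        (∑ i ∈ Finset.Icc 2 n, (0 * omega i x ^ 4 + 2 * (lami i x * omega i x ^ 2)
          + (-(lam x)) * omega i x ^ 2 + 0 * (lami i x * omega i x)
          + lam x * lami i x ^ 2 + c * lami i x + 0 * omega i x + 0)) x :=
      HasDerivAt.fun_sum fun i hi =>
        hasDerivAt_congr_d ((Hli i hi x hx).mul (Hω i hi x hx)) (by ring)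
    have hev : (fun z => ∑ i ∈ Finset.Icc 2 n, lami i z * omega i z) =ᶠ[nhds x]
        fun z => lam z * T z - 3 * deriv lam z :=
      Filter.eventuallyEq_of_mem (hs.mem_nhds hx) fun z hz => hDall z hz
    have HR : HasDerivAt (fun z => lam z * T z - 3 * deriv lam z)
        (deriv lam x * T x + lam x * deriv T x - 3 * deriv (deriv lam) x) x :=
      ((Hlam x hx).mul HT).sub ((Hlam' x hx).const_mul 3)
    have h1 := hev.deriv_eq
    rw [Hσ.deriv, HR.deriv] at h1
    refine Eq.trans ?_ h1
    refine ((sum_split' (Finset.Icc 2 n) (fun i => omega i x) (fun i => lami i x) _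
      0 2 (-(lam x)) 0 (lam x) c 0 0 (fun i _ => by ring)).symm).symm.trans ?_ |>.symm
    ring
  have hTx : T x = ∑ i ∈ Finset.Icc 2 n, omega i x := by simp only [hT]
  have hS1 := hsum1 x hx
  have hK2 := hsum2 x hx
  have hD := hDall x hx
  linear_combination (-1/6 : ℝ) * hA + (-(lam x)) * hB + (lam x ^ 2 / 3 + 4/3 * c) * hC
    + (-(2/3) * deriv lam x) * hD
    + (3/2 * c * lam x + lam x ^ 3 / 2 - deriv (deriv lam) x / 6) * hS1
    + (lam x ^ 2 / 2) * hK2 + (-(1/2) * lam x * deriv lam x) * hTx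
end

section
/- Under the stated ODE system, on all of I one has f_5 = (1/24)T'''' - (5/6)(λ^2 + c)T'' - (35/24)λλ'T' - (1/24)(11λλ'' + 7(λ')^2 - 24λ^4 - 48cλ^2 - 24c^2)T + (11/8)λλ''' + (15/8)λ'λ'' - 2λ^3λ' - ((134 - 5n^2)/12)cλλ' - (5/12)λλ'R. -/
open scoped BigOperators

private lemma key_deriv {f g : ℝ → ℝ} {s : Set ℝ} {x w : ℝ} (hs : IsOpen s) (hx : x ∈ s)
    (h : ∀ y ∈ s, f y = g y) (hg : HasDerivAt g w x) :
    deriv f x = w ∧ HasDerivAt f (deriv f x) x := by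
  have hf : HasDerivAt f w x :=
    hg.congr_of_eventuallyEq (Filter.eventuallyEq_of_mem (hs.mem_nhds hx) fun y hy => h y hy)
  exact ⟨hf.deriv, hf.deriv.symm ▸ hf⟩

/-- Part of Lemma 2.2: formula for f₅. -/
theorem stmt_4 (n : ℕ) (hn : 2 ≤ n) (c R : ℝ) (a b : ℝ) (hab : a < b)
    (lam : ℝ → ℝ) (lami omega : ℕ → ℝ → ℝ)
    (hlam : ContDiffOn ℝ (⊤ : ℕ∞) lam (Set.Ioo a b))
    (hlami : ∀ i ∈ Finset.Icc 2 n, ContDiffOn ℝ (⊤ : ℕ∞) (lami i) (Set.Ioo a b))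
    (homega : ∀ i ∈ Finset.Icc 2 n, ContDiffOn ℝ (⊤ : ℕ∞) (omega i) (Set.Ioo a b))
    (hode1 : ∀ i ∈ Finset.Icc 2 n, ∀ x ∈ Set.Ioo a b,
      deriv (lami i) x = (lami i x - lam x) * omega i x)
    (hode2 : ∀ i ∈ Finset.Icc 2 n, ∀ x ∈ Set.Ioo a b,
      deriv (omega i) x = omega i x ^ 2 + lam x * lami i x + c)
    (hsum1 : ∀ x ∈ Set.Ioo a b, ∑ i ∈ Finset.Icc 2 n, lami i x = -3 * lam x)
    (hsum2 : ∀ x ∈ Set.Ioo a b, ∑ i ∈ Finset.Icc 2 n, lami i x ^ 2 =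
      (n : ℝ) * ((n : ℝ) - 1) * c + 3 * lam x ^ 2 - R)
    (T : ℝ → ℝ) (hT : T = fun x => ∑ i ∈ Finset.Icc 2 n, omega i x) :
    ∀ x ∈ Set.Ioo a b,
      ∑ i ∈ Finset.Icc 2 n, omega i x ^ 5 =
        (1 / 24) * deriv (deriv (deriv (deriv T))) x
          - (5 / 6) * (lam x ^ 2 + c) * deriv (deriv T) x
          - (35 / 24) * lam x * deriv lam x * deriv T x
          - (1 / 24) * (11 * lam x * deriv (deriv lam) x + 7 * deriv lam x ^ 2
              - 24 * lam x ^ 4 - 48 * c * lam x ^ 2 - 24 * c ^ 2) * T x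
          + (11 / 8) * lam x * deriv (deriv (deriv lam)) x
          + (15 / 8) * deriv lam x * deriv (deriv lam) x
          - 2 * lam x ^ 3 * deriv lam x
          - ((134 - 5 * (n : ℝ) ^ 2) / 12) * c * lam x * deriv lam x
          - (5 / 12) * lam x * deriv lam x * R := by
  have hs : IsOpen (Set.Ioo a b) := isOpen_Ioo
  have hTx : ∀ y, T y = ∑ i ∈ Finset.Icc 2 n, omega i y := fun y => by rw [hT]
  have cardIcc : (((Finset.Icc 2 n).card : ℕ) : ℝ) = (n : ℝ) - 1 := by
    rw [Nat.card_Icc]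
    have h2 : n + 1 - 2 = n - 1 := by omega
    rw [h2, Nat.cast_sub (by omega : 1 ≤ n)]
    norm_num
  -- basic differentiability
  have hdl0 : ∀ x ∈ Set.Ioo a b, HasDerivAt lam (deriv lam x) x := fun x hx =>
    ((hlam.differentiableOn (by simp)).differentiableAt (hs.mem_nhds hx)).hasDerivAt
  have hlamc1 : ContDiffOn ℝ (⊤ : ℕ∞) (deriv lam) (Set.Ioo a b) := hlam.deriv_of_isOpen hs (by simp)
  have hlamc2 : ContDiffOn ℝ (⊤ : ℕ∞) (deriv (deriv lam)) (Set.Ioo a b) :=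
    hlamc1.deriv_of_isOpen hs (by simp)
  have hdl1 : ∀ x ∈ Set.Ioo a b, HasDerivAt (deriv lam) (deriv (deriv lam) x) x := fun x hx =>
    ((hlamc1.differentiableOn (by simp)).differentiableAt (hs.mem_nhds hx)).hasDerivAt
  have hdl2 : ∀ x ∈ Set.Ioo a b,
      HasDerivAt (deriv (deriv lam)) (deriv (deriv (deriv lam)) x) x := fun x hx =>
    ((hlamc2.differentiableOn (by simp)).differentiableAt (hs.mem_nhds hx)).hasDerivAt
  have hO : ∀ i ∈ Finset.Icc 2 n, ∀ x ∈ Set.Ioo a b,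
      HasDerivAt (omega i) (omega i x ^ 2 + lam x * lami i x + c) x := fun i hi x hx => by
    have h0 := (((homega i hi).differentiableOn (by simp)).differentiableAt
      (hs.mem_nhds hx)).hasDerivAt
    rwa [hode2 i hi x hx] at h0
  have hL : ∀ i ∈ Finset.Icc 2 n, ∀ x ∈ Set.Ioo a b,
      HasDerivAt (lami i) ((lami i x - lam x) * omega i x) x := fun i hi x hx => by
    have h0 := (((hlami i hi).differentiableOn (by simp)).differentiableAt
      (hs.mem_nhds hx)).hasDerivAt
    rwa [hode1 i hi x hx] at h0
  have hlamsq : ∀ x ∈ Set.Ioo a b, HasDerivAt (fun y => lam y ^ 2)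
      (2 * lam x * deriv lam x) x := fun x hx => by
    have h0 := (hdl0 x hx).pow 2
    norm_num at h0
    exact h0
  -- derivatives of the basic sums, with cleaned-up values
  have hS2 : ∀ x ∈ Set.Ioo a b, HasDerivAt (fun y => ∑ i ∈ Finset.Icc 2 n, omega i y ^ 2)
      (2 * (∑ i ∈ Finset.Icc 2 n, omega i x ^ 3)
        + 2 * lam x * (∑ i ∈ Finset.Icc 2 n, lami i x * omega i x)
        + 2 * c * T x) x := fun x hx => by
    have h0 := HasDerivAt.fun_sum (fun i hi => (hO i hi x hx).pow 2)
    refine HasDerivAt.congr_deriv h0 (Eq.symm ?_)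
    rw [hTx x, Finset.mul_sum, Finset.mul_sum, Finset.mul_sum, ← Finset.sum_add_distrib,
      ← Finset.sum_add_distrib]
    refine Finset.sum_congr rfl fun i _ => ?_
    simp only [Nat.cast_ofNat, show (2:ℕ) - 1 = 1 from rfl]
    ring
  have hS3 : ∀ x ∈ Set.Ioo a b, HasDerivAt (fun y => ∑ i ∈ Finset.Icc 2 n, omega i y ^ 3)
      (3 * (∑ i ∈ Finset.Icc 2 n, omega i x ^ 4)
        + 3 * lam x * (∑ i ∈ Finset.Icc 2 n, lami i x * omega i x ^ 2)
        + 3 * c * (∑ i ∈ Finset.Icc 2 n, omega i x ^ 2)) x := fun x hx => by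
    have h0 := HasDerivAt.fun_sum (fun i hi => (hO i hi x hx).pow 3)
    refine HasDerivAt.congr_deriv h0 (Eq.symm ?_)
    rw [Finset.mul_sum, Finset.mul_sum, Finset.mul_sum, ← Finset.sum_add_distrib,
      ← Finset.sum_add_distrib]
    refine Finset.sum_congr rfl fun i _ => ?_
    simp only [Nat.cast_ofNat, show (3:ℕ) - 1 = 2 from rfl]
    ring
  have hS4 : ∀ x ∈ Set.Ioo a b, HasDerivAt (fun y => ∑ i ∈ Finset.Icc 2 n, omega i y ^ 4)
      (4 * (∑ i ∈ Finset.Icc 2 n, omega i x ^ 5)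
        + 4 * lam x * (∑ i ∈ Finset.Icc 2 n, lami i x * omega i x ^ 3)
        + 4 * c * (∑ i ∈ Finset.Icc 2 n, omega i x ^ 3)) x := fun x hx => by
    have h0 := HasDerivAt.fun_sum (fun i hi => (hO i hi x hx).pow 4)
    refine HasDerivAt.congr_deriv h0 (Eq.symm ?_)
    rw [Finset.mul_sum, Finset.mul_sum, Finset.mul_sum, ← Finset.sum_add_distrib,
      ← Finset.sum_add_distrib]
    refine Finset.sum_congr rfl fun i _ => ?_
    simp only [Nat.cast_ofNat, show (4:ℕ) - 1 = 3 from rfl]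
    ring
  have hSP1 : ∀ x ∈ Set.Ioo a b, HasDerivAt (fun y => ∑ i ∈ Finset.Icc 2 n, lami i y)
      ((∑ i ∈ Finset.Icc 2 n, lami i x * omega i x) - lam x * T x) x := fun x hx => by
    have h0 := HasDerivAt.fun_sum (fun i hi => hL i hi x hx)
    refine HasDerivAt.congr_deriv h0 (Eq.symm ?_)
    rw [hTx x, Finset.mul_sum, ← Finset.sum_sub_distrib]
    refine Finset.sum_congr rfl fun i _ => ?_
    ring
  have hSP2 : ∀ x ∈ Set.Ioo a b, HasDerivAt (fun y => ∑ i ∈ Finset.Icc 2 n, lami i y ^ 2)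
      (2 * (∑ i ∈ Finset.Icc 2 n, lami i x ^ 2 * omega i x)
        - 2 * lam x * (∑ i ∈ Finset.Icc 2 n, lami i x * omega i x)) x := fun x hx => by
    have h0 := HasDerivAt.fun_sum (fun i hi => (hL i hi x hx).pow 2)
    refine HasDerivAt.congr_deriv h0 (Eq.symm ?_)
    rw [Finset.mul_sum, Finset.mul_sum, ← Finset.sum_sub_distrib]
    refine Finset.sum_congr rfl fun i _ => ?_
    simp only [Nat.cast_ofNat, show (2:ℕ) - 1 = 1 from rfl]
    ring
  have hSG1 : ∀ x ∈ Set.Ioo a b,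
      HasDerivAt (fun y => ∑ i ∈ Finset.Icc 2 n, lami i y * omega i y)
      (2 * (∑ i ∈ Finset.Icc 2 n, lami i x * omega i x ^ 2)
        - lam x * (∑ i ∈ Finset.Icc 2 n, omega i x ^ 2)
        + lam x * (∑ i ∈ Finset.Icc 2 n, lami i x ^ 2)
        + c * (∑ i ∈ Finset.Icc 2 n, lami i x)) x := fun x hx => by
    have h0 := HasDerivAt.fun_sum (fun i hi => (hL i hi x hx).mul (hO i hi x hx))
    refine HasDerivAt.congr_deriv h0 (Eq.symm ?_)
    rw [Finset.mul_sum, Finset.mul_sum, Finset.mul_sum, Finset.mul_sum,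
      ← Finset.sum_sub_distrib, ← Finset.sum_add_distrib, ← Finset.sum_add_distrib]
    refine Finset.sum_congr rfl fun i _ => ?_
    ring
  have hSG2 : ∀ x ∈ Set.Ioo a b,
      HasDerivAt (fun y => ∑ i ∈ Finset.Icc 2 n, lami i y * omega i y ^ 2)
      (3 * (∑ i ∈ Finset.Icc 2 n, lami i x * omega i x ^ 3)
        - lam x * (∑ i ∈ Finset.Icc 2 n, omega i x ^ 3)
        + 2 * lam x * (∑ i ∈ Finset.Icc 2 n, lami i x ^ 2 * omega i x)
        + 2 * c * (∑ i ∈ Finset.Icc 2 n, lami i x * omega i x)) x := fun x hx => by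
    have h0 := HasDerivAt.fun_sum (fun i hi => (hL i hi x hx).mul ((hO i hi x hx).pow 2))
    refine HasDerivAt.congr_deriv h0 (Eq.symm ?_)
    rw [Finset.mul_sum, Finset.mul_sum, Finset.mul_sum, Finset.mul_sum,
      ← Finset.sum_sub_distrib, ← Finset.sum_add_distrib, ← Finset.sum_add_distrib]
    refine Finset.sum_congr rfl fun i _ => ?_
    simp only [Nat.cast_ofNat, show (2:ℕ) - 1 = 1 from rfl, Pi.pow_apply]
    ring
  -- derivative of T
  have hTd : ∀ x ∈ Set.Ioo a b, HasDerivAt T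
      ((∑ i ∈ Finset.Icc 2 n, omega i x ^ 2) - 3 * lam x ^ 2 + ((n : ℝ) - 1) * c) x :=
    fun x hx => by
    rw [hT]
    have h0 := HasDerivAt.fun_sum (fun i hi => hO i hi x hx)
    refine HasDerivAt.congr_deriv h0 (Eq.symm ?_)
    rw [Finset.sum_add_distrib, Finset.sum_add_distrib, ← Finset.mul_sum, hsum1 x hx,
      Finset.sum_const, nsmul_eq_mul, cardIcc]
    ring
  have h1 : ∀ x ∈ Set.Ioo a b, deriv T x =
      (∑ i ∈ Finset.Icc 2 n, omega i x ^ 2) - 3 * lam x ^ 2 + ((n : ℝ) - 1) * c :=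
    fun x hx => (hTd x hx).deriv
  have hTdiff : ∀ x ∈ Set.Ioo a b, HasDerivAt T (deriv T x) x := fun x hx => by
    rw [h1 x hx]; exact hTd x hx
  -- h2 : sum of lami*omega
  have h2 : ∀ x ∈ Set.Ioo a b, (∑ i ∈ Finset.Icc 2 n, lami i x * omega i x) =
      lam x * T x - 3 * deriv lam x := fun x hx => by
    have e := (key_deriv (f := fun y => ∑ i ∈ Finset.Icc 2 n, lami i y)
      (g := fun y => -3 * lam y) hs hx hsum1 ((hdl0 x hx).const_mul (-3))).1
    have e2 := (hSP1 x hx).deriv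
    linear_combination e - e2
  -- h3b : sum of lami^2*omega
  have h3b : ∀ x ∈ Set.Ioo a b, (∑ i ∈ Finset.Icc 2 n, lami i x ^ 2 * omega i x) =
      lam x ^ 2 * T x := fun x hx => by
    have hg : HasDerivAt (fun y => (n : ℝ) * ((n : ℝ) - 1) * c + 3 * lam y ^ 2 - R)
        (0 + 3 * (2 * lam x * deriv lam x)) x :=
      ((hasDerivAt_const x ((n : ℝ) * ((n : ℝ) - 1) * c)).add
        ((hlamsq x hx).const_mul 3)).sub_const R
    have e := (key_deriv (f := fun y => ∑ i ∈ Finset.Icc 2 n, lami i y ^ 2) hs hx hsum2 hg).1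
    have e2 := (hSP2 x hx).deriv
    linear_combination (1/2 : ℝ) * e - (1/2 : ℝ) * e2 + lam x * (h2 x hx)
  -- level 2 : second derivative of T
  have hstep3 : ∀ x ∈ Set.Ioo a b,
      deriv (deriv T) x = (2 * (∑ i ∈ Finset.Icc 2 n, omega i x ^ 3)
          + 2 * lam x * (∑ i ∈ Finset.Icc 2 n, lami i x * omega i x) + 2 * c * T x)
          - 3 * (2 * lam x * deriv lam x)
        ∧ HasDerivAt (deriv T) (deriv (deriv T) x) x := fun x hx => by
    have hg : HasDerivAt (fun y => (∑ i ∈ Finset.Icc 2 n, omega i y ^ 2)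
        - 3 * lam y ^ 2 + ((n : ℝ) - 1) * c)
        ((2 * (∑ i ∈ Finset.Icc 2 n, omega i x ^ 3)
          + 2 * lam x * (∑ i ∈ Finset.Icc 2 n, lami i x * omega i x) + 2 * c * T x)
          - 3 * (2 * lam x * deriv lam x)) x :=
      ((hS2 x hx).sub ((hlamsq x hx).const_mul 3)).add_const (((n : ℝ) - 1) * c)
    exact key_deriv (f := deriv T) hs hx h1 hg
  have h3 : ∀ x ∈ Set.Ioo a b, deriv (deriv T) x =
      2 * (∑ i ∈ Finset.Icc 2 n, omega i x ^ 3) + 2 * (lam x ^ 2 + c) * T x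
        - 12 * (lam x * deriv lam x) := fun x hx => by
    linear_combination (hstep3 x hx).1 + 2 * lam x * (h2 x hx)
  have hDT : ∀ x ∈ Set.Ioo a b, HasDerivAt (deriv T) (deriv (deriv T) x) x :=
    fun x hx => (hstep3 x hx).2
  -- h4 : sum of lami*omega^2
  have h4 : ∀ x ∈ Set.Ioo a b, (∑ i ∈ Finset.Icc 2 n, lami i x * omega i x ^ 2) =
      -(3/2) * deriv (deriv lam) x + (1/2) * lam x * R + 2 * c * lam x
        - (1/2) * c * (n : ℝ) ^ 2 * lam x + lam x * deriv T x
        + (1/2) * deriv lam x * T x := fun x hx => by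
    have hg : HasDerivAt (fun y => lam y * T y - 3 * deriv lam y)
        ((deriv lam x * T x + lam x * deriv T x) - 3 * deriv (deriv lam) x) x :=
      ((hdl0 x hx).mul (hTdiff x hx)).sub ((hdl1 x hx).const_mul 3)
    have e := (key_deriv (f := fun y => ∑ i ∈ Finset.Icc 2 n, lami i y * omega i y)
      hs hx h2 hg).1
    have e2 := (hSG1 x hx).deriv
    have hs1 := hsum1 x hx
    have hs2 := hsum2 x hx
    have e1 := h1 x hx
    linear_combination (1/2 : ℝ) * e - (1/2 : ℝ) * e2 - (1/2 : ℝ) * lam x * hs2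
      - (1/2 : ℝ) * c * hs1 - (1/2 : ℝ) * lam x * e1
  -- level 3 : third derivative of T
  have hstep5 : ∀ x ∈ Set.Ioo a b,
      deriv (deriv (deriv T)) x =
        (2 * (3 * (∑ i ∈ Finset.Icc 2 n, omega i x ^ 4)
          + 3 * lam x * (∑ i ∈ Finset.Icc 2 n, lami i x * omega i x ^ 2)
          + 3 * c * (∑ i ∈ Finset.Icc 2 n, omega i x ^ 2))
        + (2 * (2 * lam x * deriv lam x) * T x + 2 * (lam x ^ 2 + c) * deriv T x))
        - (12 * (deriv lam x * deriv lam x + lam x * deriv (deriv lam) x))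
        ∧ HasDerivAt (deriv (deriv T)) (deriv (deriv (deriv T)) x) x := fun x hx => by
    have hg : HasDerivAt (fun y => 2 * (∑ i ∈ Finset.Icc 2 n, omega i y ^ 3)
        + 2 * (lam y ^ 2 + c) * T y - 12 * (lam y * deriv lam y))
        ((2 * (3 * (∑ i ∈ Finset.Icc 2 n, omega i x ^ 4)
          + 3 * lam x * (∑ i ∈ Finset.Icc 2 n, lami i x * omega i x ^ 2)
          + 3 * c * (∑ i ∈ Finset.Icc 2 n, omega i x ^ 2))
        + (2 * (2 * lam x * deriv lam x) * T x + 2 * (lam x ^ 2 + c) * deriv T x))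
        - (12 * (deriv lam x * deriv lam x + lam x * deriv (deriv lam) x))) x := by
      have t1 := ((hS3 x hx).const_mul 2)
      have t2 := (((hlamsq x hx).add_const c).const_mul 2).mul (hTdiff x hx)
      have t3 := ((hdl0 x hx).mul (hdl1 x hx)).const_mul 12
      exact (t1.add t2).sub t3
    exact key_deriv (f := deriv (deriv T)) hs hx h3 hg
  have h5 : ∀ x ∈ Set.Ioo a b, deriv (deriv (deriv T)) x =
      6 * (∑ i ∈ Finset.Icc 2 n, omega i x ^ 4)
        + 6 * lam x * (∑ i ∈ Finset.Icc 2 n, lami i x * omega i x ^ 2)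
        + 6 * c * (∑ i ∈ Finset.Icc 2 n, omega i x ^ 2)
        + 4 * (lam x * deriv lam x) * T x + 2 * (lam x ^ 2 + c) * deriv T x
        - 12 * deriv lam x ^ 2 - 12 * (lam x * deriv (deriv lam) x) := fun x hx => by
    linear_combination (hstep5 x hx).1
  have hDDT : ∀ x ∈ Set.Ioo a b,
      HasDerivAt (deriv (deriv T)) (deriv (deriv (deriv T)) x) x :=
    fun x hx => (hstep5 x hx).2
  -- final computation at a point
  intro x hx
  -- raw derivative of the G2-sum two ways
  have e6B := (hSG2 x hx).deriv
  have e6A : deriv (fun y => ∑ i ∈ Finset.Icc 2 n, lami i y * omega i y ^ 2) x =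
      ((((-(3/2) * deriv (deriv (deriv lam)) x + (1/2) * deriv lam x * R)
        + 2 * c * deriv lam x) - (1/2) * c * (n : ℝ) ^ 2 * deriv lam x)
        + (deriv lam x * deriv T x + lam x * deriv (deriv T) x))
        + ((1/2) * deriv (deriv lam) x * T x + (1/2) * deriv lam x * deriv T x) := by
    have t1 := (hdl2 x hx).const_mul (-(3/2) : ℝ)
    have t2 := ((hdl0 x hx).const_mul (1/2 : ℝ)).mul_const R
    have t3 := (hdl0 x hx).const_mul (2 * c)
    have t4 := (hdl0 x hx).const_mul ((1/2) * c * (n : ℝ) ^ 2)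
    have t5 := (hdl0 x hx).mul (hDT x hx)
    have t6 := ((hdl1 x hx).const_mul (1/2 : ℝ)).mul (hTdiff x hx)
    have hg := ((((t1.add t2).add t3).sub t4).add t5).add t6
    have e := (key_deriv (f := fun y => ∑ i ∈ Finset.Icc 2 n, lami i y * omega i y ^ 2)
      hs hx h4 hg).1
    linear_combination e
  -- raw fourth derivative of T
  have e5 : deriv (deriv (deriv (deriv T))) x =
      6 * (4 * (∑ i ∈ Finset.Icc 2 n, omega i x ^ 5)
          + 4 * lam x * (∑ i ∈ Finset.Icc 2 n, lami i x * omega i x ^ 3)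
          + 4 * c * (∑ i ∈ Finset.Icc 2 n, omega i x ^ 3))
        + (6 * deriv lam x * (∑ i ∈ Finset.Icc 2 n, lami i x * omega i x ^ 2)
          + 6 * lam x * (3 * (∑ i ∈ Finset.Icc 2 n, lami i x * omega i x ^ 3)
            - lam x * (∑ i ∈ Finset.Icc 2 n, omega i x ^ 3)
            + 2 * lam x * (∑ i ∈ Finset.Icc 2 n, lami i x ^ 2 * omega i x)
            + 2 * c * (∑ i ∈ Finset.Icc 2 n, lami i x * omega i x)))
        + 6 * c * (2 * (∑ i ∈ Finset.Icc 2 n, omega i x ^ 3)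
          + 2 * lam x * (∑ i ∈ Finset.Icc 2 n, lami i x * omega i x) + 2 * c * T x)
        + (4 * (deriv lam x * deriv lam x + lam x * deriv (deriv lam) x) * T x
          + 4 * (lam x * deriv lam x) * deriv T x)
        + (2 * (2 * lam x * deriv lam x) * deriv T x
          + 2 * (lam x ^ 2 + c) * deriv (deriv T) x)
        - 24 * (deriv lam x * deriv (deriv lam) x)
        - 12 * (deriv lam x * deriv (deriv lam) x + lam x * deriv (deriv (deriv lam)) x) := by
    have a1 := (hS4 x hx).const_mul 6
    have a2 := ((hdl0 x hx).const_mul 6).mul (hSG2 x hx)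
    have a3 := (hS2 x hx).const_mul (6 * c)
    have a4 := (((hdl0 x hx).mul (hdl1 x hx)).const_mul 4).mul (hTdiff x hx)
    have a5 := (((hlamsq x hx).add_const c).const_mul 2).mul (hDT x hx)
    have a6 := ((hdl1 x hx).pow 2).const_mul 12
    have a7 := ((hdl0 x hx).mul (hdl2 x hx)).const_mul 12
    have hg := (((((a1.add a2).add a3).add a4).add a5).sub a6).sub a7
    have e := (key_deriv (f := deriv (deriv (deriv T))) hs hx h5 hg).1
    rw [e]
    simp only [Nat.cast_ofNat, show (2:ℕ) - 1 = 1 from rfl, Pi.mul_apply]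
    ring
  linear_combination (-(1:ℝ)/24) * e5 + ((7:ℝ)/12) * lam x * e6B - ((7:ℝ)/12) * lam x * e6A
    + ((2:ℝ)/3) * lam x ^ 2 * (h3b x hx) + (-(1:ℝ)/4) * deriv lam x * (h4 x hx)
    + ((3:ℝ)/4 * c + (1:ℝ)/6 * lam x ^ 2) * (h3 x hx) + ((1:ℝ)/6) * lam x * c * (h2 x hx)
end

section
/- Under the stated ODE system, on all of I one has Σ_{i=2}^n λ_i ω_i^2 = λT' + (1/2)λ'T - (3/2)λ'' - (n^2/2 - 2)cλ + (1/2)λR. -/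
open scoped BigOperators

/-- Identity for g₂ from the proof of Lemma 2.2. -/
theorem stmt_6 (n : ℕ) (hn : 2 ≤ n) (c R : ℝ) (a b : ℝ) (hab : a < b)
    (lam : ℝ → ℝ) (lami omega : ℕ → ℝ → ℝ)
    (hlam : ContDiffOn ℝ (⊤ : ℕ∞) lam (Set.Ioo a b))
    (hlami : ∀ i ∈ Finset.Icc 2 n, ContDiffOn ℝ (⊤ : ℕ∞) (lami i) (Set.Ioo a b))
    (homega : ∀ i ∈ Finset.Icc 2 n, ContDiffOn ℝ (⊤ : ℕ∞) (omega i) (Set.Ioo a b))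
    (hode1 : ∀ i ∈ Finset.Icc 2 n, ∀ x ∈ Set.Ioo a b,
      deriv (lami i) x = (lami i x - lam x) * omega i x)
    (hode2 : ∀ i ∈ Finset.Icc 2 n, ∀ x ∈ Set.Ioo a b,
      deriv (omega i) x = omega i x ^ 2 + lam x * lami i x + c)
    (hsum1 : ∀ x ∈ Set.Ioo a b, ∑ i ∈ Finset.Icc 2 n, lami i x = -3 * lam x)
    (hsum2 : ∀ x ∈ Set.Ioo a b, ∑ i ∈ Finset.Icc 2 n, lami i x ^ 2 =
      (n : ℝ) * ((n : ℝ) - 1) * c + 3 * lam x ^ 2 - R)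
    (T : ℝ → ℝ) (hT : T = fun x => ∑ i ∈ Finset.Icc 2 n, omega i x) :
    ∀ x ∈ Set.Ioo a b,
      ∑ i ∈ Finset.Icc 2 n, lami i x * omega i x ^ 2 =
        lam x * deriv T x + (1 / 2) * deriv lam x * T x
          - (3 / 2) * deriv (deriv lam) x
          - ((n : ℝ) ^ 2 / 2 - 2) * c * lam x + (1 / 2) * lam x * R := by
  have hopen : IsOpen (Set.Ioo a b) := isOpen_Ioo
  have hdl : ∀ y ∈ Set.Ioo a b, DifferentiableAt ℝ lam y := fun y hy =>
    (hlam.contDiffAt (hopen.mem_nhds hy)).differentiableAt (by simp)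
  have hdli : ∀ i ∈ Finset.Icc 2 n, ∀ y ∈ Set.Ioo a b, DifferentiableAt ℝ (lami i) y :=
    fun i hi y hy => ((hlami i hi).contDiffAt (hopen.mem_nhds hy)).differentiableAt (by simp)
  have hdo : ∀ i ∈ Finset.Icc 2 n, ∀ y ∈ Set.Ioo a b, DifferentiableAt ℝ (omega i) y :=
    fun i hi y hy => ((homega i hi).contDiffAt (hopen.mem_nhds hy)).differentiableAt (by simp)
  have hcard : (((Finset.Icc 2 n).card : ℕ) : ℝ) = (n : ℝ) - 1 := by
    rw [Nat.card_Icc]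
    have h : n + 1 - 2 = n - 1 := by omega
    rw [h, Nat.cast_sub (by omega)]
    norm_num
  -- first derivative of lam, expressed via the ODE system
  have hderiv_lam : ∀ y ∈ Set.Ioo a b,
      deriv lam y = -(1/3) * ∑ i ∈ Finset.Icc 2 n, (lami i y - lam y) * omega i y := by
    intro y hy
    have h1 : (fun z => ∑ i ∈ Finset.Icc 2 n, lami i z) =ᶠ[nhds y]
        fun z => -3 * lam z :=
      Filter.eventuallyEq_of_mem (hopen.mem_nhds hy) hsum1
    have h2 := h1.deriv_eq
    rw [deriv_fun_sum (fun i hi => hdli i hi y hy), deriv_const_mul _ (hdl y hy)] at h2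
    have h3 : ∑ i ∈ Finset.Icc 2 n, deriv (lami i) y
        = ∑ i ∈ Finset.Icc 2 n, (lami i y - lam y) * omega i y :=
      Finset.sum_congr rfl fun i hi => hode1 i hi y hy
    rw [h3] at h2
    linarith
  intro x hx
  -- second derivative of lam
  have hderiv2 : deriv (deriv lam) x =
      -(1/3) * ∑ i ∈ Finset.Icc 2 n,
        (((lami i x - lam x) * omega i x - deriv lam x) * omega i x
          + (lami i x - lam x) * (omega i x ^ 2 + lam x * lami i x + c)) := by
    have h1 : deriv lam =ᶠ[nhds x]
        fun y => -(1/3) * ∑ i ∈ Finset.Icc 2 n, (lami i y - lam y) * omega i y :=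
      Filter.eventuallyEq_of_mem (hopen.mem_nhds hx) hderiv_lam
    have hdiffsum : ∀ i ∈ Finset.Icc 2 n,
        DifferentiableAt ℝ (fun y => (lami i y - lam y) * omega i y) x :=
      fun i hi => ((hdli i hi x hx).sub (hdl x hx)).mul (hdo i hi x hx)
    rw [h1.deriv_eq, deriv_const_mul _ (DifferentiableAt.fun_sum hdiffsum),
      deriv_fun_sum hdiffsum]
    congr 1
    refine Finset.sum_congr rfl fun i hi => ?_
    rw [deriv_fun_mul ((hdli i hi x hx).fun_sub (hdl x hx)) (hdo i hi x hx),
      deriv_fun_sub (hdli i hi x hx) (hdl x hx), hode1 i hi x hx, hode2 i hi x hx]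
  -- derivative of T
  have hderivT : deriv T x =
      (∑ i ∈ Finset.Icc 2 n, omega i x ^ 2) - 3 * lam x ^ 2 + ((n : ℝ) - 1) * c := by
    rw [hT, deriv_fun_sum (fun i hi => hdo i hi x hx)]
    have h3 : ∑ i ∈ Finset.Icc 2 n, deriv (omega i) x
        = ∑ i ∈ Finset.Icc 2 n, (omega i x ^ 2 + lam x * lami i x + c) :=
      Finset.sum_congr rfl fun i hi => hode2 i hi x hx
    rw [h3, Finset.sum_add_distrib, Finset.sum_add_distrib, ← Finset.mul_sum,
      hsum1 x hx, Finset.sum_const, nsmul_eq_mul, hcard]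
    ring
  have hTx : T x = ∑ i ∈ Finset.Icc 2 n, omega i x := by rw [hT]
  -- expand the sum in hderiv2
  have hexp : ∑ i ∈ Finset.Icc 2 n,
      (((lami i x - lam x) * omega i x - deriv lam x) * omega i x
        + (lami i x - lam x) * (omega i x ^ 2 + lam x * lami i x + c)) =
      2 * (∑ i ∈ Finset.Icc 2 n, lami i x * omega i x ^ 2)
        - 2 * lam x * (∑ i ∈ Finset.Icc 2 n, omega i x ^ 2)
        - deriv lam x * (∑ i ∈ Finset.Icc 2 n, omega i x)
        + lam x * ((n : ℝ) * ((n : ℝ) - 1) * c + 3 * lam x ^ 2 - R)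
        + (c - lam x ^ 2) * (-3 * lam x)
        - ((n : ℝ) - 1) * (c * lam x) := by
    have h1 : ∀ i ∈ Finset.Icc 2 n,
        ((lami i x - lam x) * omega i x - deriv lam x) * omega i x
          + (lami i x - lam x) * (omega i x ^ 2 + lam x * lami i x + c) =
        2 * (lami i x * omega i x ^ 2) - 2 * lam x * (omega i x ^ 2)
          - deriv lam x * omega i x + lam x * (lami i x ^ 2)
          + (c - lam x ^ 2) * lami i x - c * lam x := by
      intro i _; ring
    rw [Finset.sum_congr rfl h1]
    simp only [Finset.sum_add_distrib, Finset.sum_sub_distrib, ← Finset.mul_sum,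
      Finset.sum_const, nsmul_eq_mul, hcard, hsum1 x hx, hsum2 x hx]
    ring
  rw [hderivT, hderiv2, hexp, hTx]
  ring
end

section
/- Under the stated ODE system, on all of I one has Σ_{i=2}^n λ_i ω_i^3 = (1/2)λT'' + (1/2)λ'T' + ((1/6)λ'' - λ^3 - cλ)T - (1/2)λ''' + (2λ^2 + (1/6)R)λ' + (1/6)(16 - n^2)cλ'. -/
open scoped BigOperators

/-- Identity for g₄ from the proof of Lemma 2.2. -/
theorem stmt_7 (n : ℕ) (hn : 2 ≤ n) (c R : ℝ) (a b : ℝ) (hab : a < b)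
    (lam : ℝ → ℝ) (lami omega : ℕ → ℝ → ℝ)
    (hlam : ContDiffOn ℝ (⊤ : ℕ∞) lam (Set.Ioo a b))
    (hlami : ∀ i ∈ Finset.Icc 2 n, ContDiffOn ℝ (⊤ : ℕ∞) (lami i) (Set.Ioo a b))
    (homega : ∀ i ∈ Finset.Icc 2 n, ContDiffOn ℝ (⊤ : ℕ∞) (omega i) (Set.Ioo a b))
    (hode1 : ∀ i ∈ Finset.Icc 2 n, ∀ x ∈ Set.Ioo a b,
      deriv (lami i) x = (lami i x - lam x) * omega i x)
    (hode2 : ∀ i ∈ Finset.Icc 2 n, ∀ x ∈ Set.Ioo a b,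
      deriv (omega i) x = omega i x ^ 2 + lam x * lami i x + c)
    (hsum1 : ∀ x ∈ Set.Ioo a b, ∑ i ∈ Finset.Icc 2 n, lami i x = -3 * lam x)
    (hsum2 : ∀ x ∈ Set.Ioo a b, ∑ i ∈ Finset.Icc 2 n, lami i x ^ 2 =
      (n : ℝ) * ((n : ℝ) - 1) * c + 3 * lam x ^ 2 - R)
    (T : ℝ → ℝ) (hT : T = fun x => ∑ i ∈ Finset.Icc 2 n, omega i x) :
    ∀ x ∈ Set.Ioo a b,
      ∑ i ∈ Finset.Icc 2 n, lami i x * omega i x ^ 3 =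
        (1 / 2) * lam x * deriv (deriv T) x + (1 / 2) * deriv lam x * deriv T x
          + ((1 / 6) * deriv (deriv lam) x - lam x ^ 3 - c * lam x) * T x
          - (1 / 2) * deriv (deriv (deriv lam)) x
          + (2 * lam x ^ 2 + (1 / 6) * R) * deriv lam x
          + (1 / 6) * (16 - (n : ℝ) ^ 2) * c * deriv lam x := by
  have hso : IsOpen (Set.Ioo a b) := isOpen_Ioo
  set s := Set.Ioo a b with hsdef
  set K := Finset.Icc 2 n with hK
  have hcard : ((K.card : ℝ)) = (n : ℝ) - 1 := by
    rw [hK, Nat.card_Icc, show n + 1 - 2 = n - 1 from by omega, Nat.cast_sub (by omega)]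
    norm_num
  have htx : ∀ y, T y = ∑ i ∈ K, omega i y := fun y => by rw [hT]
  -- differentiability helpers
  have hdiffAt : ∀ {f : ℝ → ℝ}, ContDiffOn ℝ (⊤ : ℕ∞) f s → ∀ x ∈ s, DifferentiableAt ℝ f x :=
    fun hf x hx => (hf.differentiableOn (by simp)).differentiableAt (hso.mem_nhds hx)
  have hlam1 : ContDiffOn ℝ (⊤ : ℕ∞) (deriv lam) s := hlam.deriv_of_isOpen hso (by simp)
  have hlam2 : ContDiffOn ℝ (⊤ : ℕ∞) (deriv (deriv lam)) s := hlam1.deriv_of_isOpen hso (by simp)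
  have hTc : ContDiffOn ℝ (⊤ : ℕ∞) T s := by rw [hT]; exact ContDiffOn.sum fun i hi => homega i hi
  have hT1 : ContDiffOn ℝ (⊤ : ℕ∞) (deriv T) s := hTc.deriv_of_isOpen hso (by simp)
  -- basic HasDerivAt facts
  have Hlam : ∀ x ∈ s, HasDerivAt lam (deriv lam x) x :=
    fun x hx => (hdiffAt hlam x hx).hasDerivAt
  have Hlam1 : ∀ x ∈ s, HasDerivAt (deriv lam) (deriv (deriv lam) x) x :=
    fun x hx => (hdiffAt hlam1 x hx).hasDerivAt
  have Hlam2 : ∀ x ∈ s, HasDerivAt (deriv (deriv lam)) (deriv (deriv (deriv lam)) x) x :=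
    fun x hx => (hdiffAt hlam2 x hx).hasDerivAt
  have HT : ∀ x ∈ s, HasDerivAt T (deriv T x) x :=
    fun x hx => (hdiffAt hTc x hx).hasDerivAt
  have HT1 : ∀ x ∈ s, HasDerivAt (deriv T) (deriv (deriv T) x) x :=
    fun x hx => (hdiffAt hT1 x hx).hasDerivAt
  have Hli : ∀ i ∈ K, ∀ x ∈ s, HasDerivAt (lami i) ((lami i x - lam x) * omega i x) x :=
    fun i hi x hx => hode1 i hi x hx ▸ (hdiffAt (hlami i hi) x hx).hasDerivAt
  have Hw : ∀ i ∈ K, ∀ x ∈ s,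
      HasDerivAt (omega i) (omega i x ^ 2 + lam x * lami i x + c) x :=
    fun i hi x hx => hode2 i hi x hx ▸ (hdiffAt (homega i hi) x hx).hasDerivAt
  have Hli2 : ∀ i ∈ K, ∀ x ∈ s, HasDerivAt (fun y => lami i y ^ 2)
      (2 * lami i x * ((lami i x - lam x) * omega i x)) x := by
    intro i hi x hx
    have h2 := (Hli i hi x hx).pow 2
    norm_num at h2
    exact h2
  have Hw2 : ∀ i ∈ K, ∀ x ∈ s, HasDerivAt (fun y => omega i y ^ 2)
      (2 * omega i x * (omega i x ^ 2 + lam x * lami i x + c)) x := by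
    intro i hi x hx
    have h2 := (Hw i hi x hx).pow 2
    norm_num at h2
    exact h2
  -- derivatives of eventually equal functions
  have hev : ∀ (f g : ℝ → ℝ), (∀ y ∈ s, f y = g y) → ∀ x ∈ s, deriv f x = deriv g x :=
    fun f g h x hx =>
      Filter.EventuallyEq.deriv_eq (Filter.eventuallyEq_of_mem (hso.mem_nhds hx) h)
  -- Step 1 : formula for deriv T
  have e5c : ∀ y ∈ s, deriv T y =
      (∑ i ∈ K, omega i y ^ 2) + lam y * (∑ i ∈ K, lami i y) + ((n : ℝ) - 1) * c := by
    intro y hy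
    have hd : HasDerivAt T (∑ i ∈ K, (omega i y ^ 2 + lam y * lami i y + c)) y := by
      rw [hT]; exact HasDerivAt.fun_sum fun i hi => Hw i hi y hy
    rw [hd.deriv, Finset.sum_add_distrib, Finset.sum_add_distrib, ← Finset.mul_sum,
      Finset.sum_const, nsmul_eq_mul, hcard]
  -- Step 2 : sum of lami*omega
  have e3c : ∀ y ∈ s, (∑ i ∈ K, lami i y * omega i y) = lam y * T y - 3 * deriv lam y := by
    intro y hy
    have h1 := hev (fun z => ∑ i ∈ K, lami i z) (fun z => -3 * lam z)
      (fun z hz => hsum1 z hz) y hy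
    have hL : HasDerivAt (fun z => ∑ i ∈ K, lami i z)
        (∑ i ∈ K, (lami i y - lam y) * omega i y) y :=
      HasDerivAt.fun_sum fun i hi => Hli i hi y hy
    have hR : HasDerivAt (fun z => -3 * lam z) (-3 * deriv lam y) y :=
      (Hlam y hy).const_mul (-3)
    rw [hL.deriv, hR.deriv] at h1
    have hexp : (∑ i ∈ K, (lami i y - lam y) * omega i y)
        = (∑ i ∈ K, lami i y * omega i y) - lam y * (∑ i ∈ K, omega i y) := by
      rw [Finset.mul_sum, ← Finset.sum_sub_distrib]
      exact Finset.sum_congr rfl fun i _ => by ring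
    rw [htx y]
    linear_combination h1 - hexp
  -- Step 3 : sum of lami^2*omega
  have hp2 : ∀ y ∈ s, (∑ i ∈ K, lami i y ^ 2 * omega i y) = lam y ^ 2 * T y := by
    intro y hy
    have h1 := hev (fun z => ∑ i ∈ K, lami i z ^ 2)
      (fun z => (n : ℝ) * ((n : ℝ) - 1) * c + 3 * lam z ^ 2 - R)
      (fun z hz => hsum2 z hz) y hy
    have hL : HasDerivAt (fun z => ∑ i ∈ K, lami i z ^ 2)
        (∑ i ∈ K, 2 * lami i y * ((lami i y - lam y) * omega i y)) y :=
      HasDerivAt.fun_sum fun i hi => Hli2 i hi y hy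
    have hlsq : HasDerivAt (fun z => lam z ^ 2) (2 * lam y * deriv lam y) y := by
      have h2 := (Hlam y hy).pow 2
      norm_num at h2
      exact h2
    have hR : HasDerivAt (fun z => (n : ℝ) * ((n : ℝ) - 1) * c + 3 * lam z ^ 2 - R)
        (3 * (2 * lam y * deriv lam y)) y :=
      ((hlsq.const_mul 3).const_add ((n : ℝ) * ((n : ℝ) - 1) * c)).sub_const R
    rw [hL.deriv, hR.deriv] at h1
    have hexp : (∑ i ∈ K, 2 * lami i y * ((lami i y - lam y) * omega i y))
        = 2 * (∑ i ∈ K, lami i y ^ 2 * omega i y)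
          - 2 * lam y * (∑ i ∈ K, lami i y * omega i y) := by
      rw [Finset.mul_sum, Finset.mul_sum, ← Finset.sum_sub_distrib]
      exact Finset.sum_congr rfl fun i _ => by ring
    linear_combination h1 / 2 - hexp / 2 + lam y * (e3c y hy)
  -- Step 4 : sum of lami*omega^2
  have hA : ∀ y ∈ s, (∑ i ∈ K, lami i y * omega i y ^ 2) =
      (1 / 2) * deriv lam y * T y + lam y * deriv T y - (3 / 2) * deriv (deriv lam) y
        + (1 / 2) * R * lam y + (1 / 2) * (4 - (n : ℝ) ^ 2) * c * lam y := by
    intro y hy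
    have h1 := hev (fun z => ∑ i ∈ K, lami i z * omega i z)
      (fun z => lam z * T z - 3 * deriv lam z) e3c y hy
    have hL : HasDerivAt (fun z => ∑ i ∈ K, lami i z * omega i z)
        (∑ i ∈ K, ((lami i y - lam y) * omega i y * omega i y
          + lami i y * (omega i y ^ 2 + lam y * lami i y + c))) y :=
      HasDerivAt.fun_sum fun i hi => (Hli i hi y hy).mul (Hw i hi y hy)
    have hR : HasDerivAt (fun z => lam z * T z - 3 * deriv lam z)
        (deriv lam y * T y + lam y * deriv T y - 3 * deriv (deriv lam) y) y :=
      ((Hlam y hy).mul (HT y hy)).sub ((Hlam1 y hy).const_mul 3)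
    rw [hL.deriv, hR.deriv] at h1
    have hexp : (∑ i ∈ K, ((lami i y - lam y) * omega i y * omega i y
          + lami i y * (omega i y ^ 2 + lam y * lami i y + c)))
        = 2 * (∑ i ∈ K, lami i y * omega i y ^ 2) - lam y * (∑ i ∈ K, omega i y ^ 2)
          + lam y * (∑ i ∈ K, lami i y ^ 2) + c * (∑ i ∈ K, lami i y) := by
      rw [Finset.mul_sum, Finset.mul_sum, Finset.mul_sum, Finset.mul_sum,
        ← Finset.sum_sub_distrib, ← Finset.sum_add_distrib, ← Finset.sum_add_distrib]
      exact Finset.sum_congr rfl fun i _ => by ring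
    rw [hexp] at h1
    have hq2 : (∑ i ∈ K, omega i y ^ 2)
        = deriv T y + 3 * lam y ^ 2 - ((n : ℝ) - 1) * c := by
      linear_combination -(e5c y hy) - lam y * (hsum1 y hy)
    rw [hq2, hsum1 y hy, hsum2 y hy] at h1
    linear_combination h1 / 2
  -- main computation at a point
  intro x hx
  -- q3 : sum of omega^3
  have hq3 : (∑ i ∈ K, omega i x ^ 3) = (1 / 2) * deriv (deriv T) x
      + 6 * lam x * deriv lam x - lam x ^ 2 * T x - c * T x := by
    have h7 := hev (deriv T)
      (fun z => (∑ i ∈ K, omega i z ^ 2) + lam z * (∑ i ∈ K, lami i z) + ((n : ℝ) - 1) * c)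
      e5c x hx
    have hR : HasDerivAt
        (fun z => (∑ i ∈ K, omega i z ^ 2) + lam z * (∑ i ∈ K, lami i z) + ((n : ℝ) - 1) * c)
        ((∑ i ∈ K, 2 * omega i x * (omega i x ^ 2 + lam x * lami i x + c))
          + (deriv lam x * (∑ i ∈ K, lami i x)
            + lam x * (∑ i ∈ K, (lami i x - lam x) * omega i x))) x :=
      ((HasDerivAt.fun_sum fun i hi => Hw2 i hi x hx).fun_add
        ((Hlam x hx).fun_mul (HasDerivAt.fun_sum fun i hi => Hli i hi x hx))).add_const
        (((n : ℝ) - 1) * c)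
    rw [hR.deriv] at h7
    have hexpA : (∑ i ∈ K, 2 * omega i x * (omega i x ^ 2 + lam x * lami i x + c))
        = 2 * (∑ i ∈ K, omega i x ^ 3) + 2 * lam x * (∑ i ∈ K, lami i x * omega i x)
          + 2 * c * (∑ i ∈ K, omega i x) := by
      rw [Finset.mul_sum, Finset.mul_sum, Finset.mul_sum,
        ← Finset.sum_add_distrib, ← Finset.sum_add_distrib]
      exact Finset.sum_congr rfl fun i _ => by ring
    have hexpB : (∑ i ∈ K, (lami i x - lam x) * omega i x)
        = (∑ i ∈ K, lami i x * omega i x) - lam x * (∑ i ∈ K, omega i x) := by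
      rw [Finset.mul_sum, ← Finset.sum_sub_distrib]
      exact Finset.sum_congr rfl fun i _ => by ring
    rw [hexpA, hexpB, ← htx x, hsum1 x hx, e3c x hx] at h7
    linear_combination -h7 / 2
  -- the final derivative identity
  have h9 := hev (fun z => ∑ i ∈ K, lami i z * omega i z ^ 2)
    (fun z => (1 / 2) * deriv lam z * T z + lam z * deriv T z
      - (3 / 2) * deriv (deriv lam) z + (1 / 2) * R * lam z
      + (1 / 2) * (4 - (n : ℝ) ^ 2) * c * lam z) hA x hx
  have hL9 : HasDerivAt (fun z => ∑ i ∈ K, lami i z * omega i z ^ 2)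
      (∑ i ∈ K, ((lami i x - lam x) * omega i x * omega i x ^ 2
        + lami i x * (2 * omega i x * (omega i x ^ 2 + lam x * lami i x + c)))) x :=
    HasDerivAt.fun_sum fun i hi => (Hli i hi x hx).mul (Hw2 i hi x hx)
  have hR9 : HasDerivAt (fun z => (1 / 2) * deriv lam z * T z + lam z * deriv T z
      - (3 / 2) * deriv (deriv lam) z + (1 / 2) * R * lam z
      + (1 / 2) * (4 - (n : ℝ) ^ 2) * c * lam z)
      (((1 / 2) * deriv (deriv lam) x * T x + (1 / 2) * deriv lam x * deriv T x
        + (deriv lam x * deriv T x + lam x * deriv (deriv T) x)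
        - (3 / 2) * deriv (deriv (deriv lam)) x) + (1 / 2) * R * deriv lam x
        + (1 / 2) * (4 - (n : ℝ) ^ 2) * c * deriv lam x) x :=
    (((((Hlam1 x hx).const_mul (1 / 2)).mul (HT x hx)).add
      ((Hlam x hx).mul (HT1 x hx))).sub ((Hlam2 x hx).const_mul (3 / 2))).add
      ((Hlam x hx).const_mul ((1 / 2) * R)) |>.add
      ((Hlam x hx).const_mul ((1 / 2) * (4 - (n : ℝ) ^ 2) * c))
  rw [hL9.deriv, hR9.deriv] at h9
  have hexp9 : (∑ i ∈ K, ((lami i x - lam x) * omega i x * omega i x ^ 2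
        + lami i x * (2 * omega i x * (omega i x ^ 2 + lam x * lami i x + c))))
      = 3 * (∑ i ∈ K, lami i x * omega i x ^ 3) - lam x * (∑ i ∈ K, omega i x ^ 3)
        + 2 * lam x * (∑ i ∈ K, lami i x ^ 2 * omega i x)
        + 2 * c * (∑ i ∈ K, lami i x * omega i x) := by
    rw [Finset.mul_sum, Finset.mul_sum, Finset.mul_sum, Finset.mul_sum,
      ← Finset.sum_sub_distrib, ← Finset.sum_add_distrib, ← Finset.sum_add_distrib]
    exact Finset.sum_congr rfl fun i _ => by ring
  rw [hexp9, hq3, hp2 x hx, e3c x hx] at h9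
  linear_combination h9 / 3
end

section
/- Let I ⊆ ℝ be a nonempty open interval, c, R real constants, and T, λ : I → ℝ smooth functions with λ(s) ≠ 0 for all s ∈ I. Suppose that on I the two equations hold: T'' - 3TT' + T^3 + (4c - 11λ^2)T + 12λλ' = 0, and (1/3)T''' - (T')^2 + ((4/3)c - (26/3)λ^2 - 2T^2)T' + T^4 + (4c - 6λ^2)T^2 - (7/3)λλ'T - 9λ^4 - λ^2 R + 11cλ^2 + 7λλ'' + 4(λ')^2 = 0. Then on I one also has 5λT' - 5λT^2 + 7λ'T + 9λ^3 + λR - 11cλ - 3λ'' = 0. -/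
/-- From the proof of Lemma 3.2: eliminating T''' and T'' from (n31), (n32) gives (n33). -/
theorem stmt_8 (c R : ℝ) (a b : ℝ) (hab : a < b) (T lam : ℝ → ℝ)
    (hT : ContDiffOn ℝ (⊤ : ℕ∞) T (Set.Ioo a b))
    (hlam : ContDiffOn ℝ (⊤ : ℕ∞) lam (Set.Ioo a b))
    (hlam0 : ∀ s ∈ Set.Ioo a b, lam s ≠ 0)
    (h1 : ∀ s ∈ Set.Ioo a b,
      deriv (deriv T) s - 3 * T s * deriv T s + T s ^ 3
        + (4 * c - 11 * lam s ^ 2) * T s + 12 * lam s * deriv lam s = 0)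
    (h2 : ∀ s ∈ Set.Ioo a b,
      (1 / 3) * deriv (deriv (deriv T)) s - deriv T s ^ 2
        + ((4 / 3) * c - (26 / 3) * lam s ^ 2 - 2 * T s ^ 2) * deriv T s
        + T s ^ 4 + (4 * c - 6 * lam s ^ 2) * T s ^ 2
        - (7 / 3) * lam s * deriv lam s * T s
        - 9 * lam s ^ 4 - lam s ^ 2 * R + 11 * c * lam s ^ 2
        + 7 * lam s * deriv (deriv lam) s + 4 * deriv lam s ^ 2 = 0) :
    ∀ s ∈ Set.Ioo a b,
      5 * lam s * deriv T s - 5 * lam s * T s ^ 2 + 7 * deriv lam s * T s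
        + 9 * lam s ^ 3 + lam s * R - 11 * c * lam s
        - 3 * deriv (deriv lam) s = 0 := by
  have hopen : IsOpen (Set.Ioo a b) := isOpen_Ioo
  have hT1 : ContDiffOn ℝ (⊤ : ℕ∞) (deriv T) (Set.Ioo a b) :=
    hT.deriv_of_isOpen hopen (by simp)
  have hT2 : ContDiffOn ℝ (⊤ : ℕ∞) (deriv (deriv T)) (Set.Ioo a b) :=
    hT1.deriv_of_isOpen hopen (by simp)
  have hlam1 : ContDiffOn ℝ (⊤ : ℕ∞) (deriv lam) (Set.Ioo a b) :=
    hlam.deriv_of_isOpen hopen (by simp)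
  intro s hs
  have hsn : Set.Ioo a b ∈ nhds s := hopen.mem_nhds hs
  have dT : HasDerivAt T (deriv T s) s :=
    ((hT.contDiffAt hsn).differentiableAt (by simp)).hasDerivAt
  have dT1 : HasDerivAt (deriv T) (deriv (deriv T) s) s :=
    ((hT1.contDiffAt hsn).differentiableAt (by simp)).hasDerivAt
  have dT2 : HasDerivAt (deriv (deriv T)) (deriv (deriv (deriv T)) s) s :=
    ((hT2.contDiffAt hsn).differentiableAt (by simp)).hasDerivAt
  have dL : HasDerivAt lam (deriv lam s) s :=
    ((hlam.contDiffAt hsn).differentiableAt (by simp)).hasDerivAt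
  have dL1 : HasDerivAt (deriv lam) (deriv (deriv lam) s) s :=
    ((hlam1.contDiffAt hsn).differentiableAt (by simp)).hasDerivAt
  -- derivative of the LHS of h1
  set t := T s
  set t1 := deriv T s
  set t2 := deriv (deriv T) s
  set t3 := deriv (deriv (deriv T)) s
  set l := lam s
  set l1 := deriv lam s
  set l2 := deriv (deriv lam) s
  have Hg : HasDerivAt (fun x => deriv (deriv T) x - 3 * T x * deriv T x + T x ^ 3
        + (4 * c - 11 * lam x ^ 2) * T x + 12 * lam x * deriv lam x)
      (t3 - (3 * t1 * t1 + 3 * t * t2) + (3 * t ^ 2 * t1)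
        + ((0 - 11 * (2 * l ^ 1 * l1)) * t + (4 * c - 11 * l ^ 2) * t1)
        + (12 * l1 * l1 + 12 * l * l2)) s := by
    have hb : HasDerivAt (fun x => 3 * T x * deriv T x) (3 * t1 * t1 + 3 * t * t2) s :=
      (dT.const_mul 3).mul dT1
    have hc : HasDerivAt (fun x => T x ^ 3) (3 * t ^ 2 * t1) s := by
      have := dT.pow 3; exact this.congr_deriv (by simp [t])
    have hd : HasDerivAt (fun x => (4 * c - 11 * lam x ^ 2) * T x)
        ((0 - 11 * (2 * l ^ 1 * l1)) * t + (4 * c - 11 * l ^ 2) * t1) s := by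
      have h2' : HasDerivAt (fun x => 11 * lam x ^ 2) (11 * (2 * l ^ 1 * l1)) s := by
        have := (dL.pow 2).const_mul 11; simpa [mul_comm, mul_assoc, mul_left_comm] using this
      exact ((hasDerivAt_const s (4 * c)).sub h2').mul dT
    have he : HasDerivAt (fun x => 12 * lam x * deriv lam x) (12 * l1 * l1 + 12 * l * l2) s :=
      (dL.const_mul 12).mul dL1
    exact (((dT2.sub hb).add hc).add hd).add he
  have hzero : deriv (fun x => deriv (deriv T) x - 3 * T x * deriv T x + T x ^ 3
        + (4 * c - 11 * lam x ^ 2) * T x + 12 * lam x * deriv lam x) s = 0 := by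
    have hev : (fun x => deriv (deriv T) x - 3 * T x * deriv T x + T x ^ 3
        + (4 * c - 11 * lam x ^ 2) * T x + 12 * lam x * deriv lam x)
        =ᶠ[nhds s] (fun _ => (0 : ℝ)) :=
      Filter.eventuallyEq_of_mem hsn h1
    rw [hev.deriv_eq]
    simp
  have hD : t3 - (3 * t1 * t1 + 3 * t * t2) + (3 * t ^ 2 * t1)
        + ((0 - 11 * (2 * l ^ 1 * l1)) * t + (4 * c - 11 * l ^ 2) * t1)
        + (12 * l1 * l1 + 12 * l * l2) = 0 := by
    rw [← Hg.deriv]; exact hzero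
  have e1 := h1 s hs
  have e2 := h2 s hs
  have key : l * (5 * l * t1 - 5 * l * t ^ 2 + 7 * l1 * t
        + 9 * l ^ 3 + l * R - 11 * c * l - 3 * l2) = 0 := by
    linear_combination (-1 : ℝ) * e2 + (1/3 : ℝ) * hD + t * e1
  exact (mul_eq_zero.mp key).resolve_left (hlam0 s hs)
end

section
/- Let c and R be real constants. There is no smooth function λ : I → ℝ on a nonempty open interval I ⊆ ℝ with λ(s) ≠ 0 and λ'(s) ≠ 0 for all s ∈ I that satisfies on all of I the two equations: 50λλ'' - 84(λ')^2 + 230λ^4 - 5Rλ^2 - 45cλ^2 = 0 and -15λλ''' + 36λ'λ'' - 273λ^3λ' - 7Rλλ' + 77cλλ' = 0. (Indeed, these two equations force 228λ^2 - 343R + 1673c = 0, hence λ constant, contradicting λ' ≠ 0.) -/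
private lemma deriv_eq_zero_of_ev {f : ℝ → ℝ} {k s : ℝ}
    (h : f =ᶠ[nhds s] fun _ => k) : deriv f s = 0 := by
  rw [h.deriv_eq]; exact deriv_const _ _

/-- Case B of the proof of Lemma 3.2: the system p₁ = 0, p₂ = 0 has no nonvanishing
solution with nowhere-zero derivative. -/
theorem stmt_9 (c R : ℝ) :
    ¬ ∃ (a b : ℝ) (lam : ℝ → ℝ), a < b ∧
      ContDiffOn ℝ (⊤ : ℕ∞) lam (Set.Ioo a b) ∧
      (∀ s ∈ Set.Ioo a b, lam s ≠ 0) ∧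
      (∀ s ∈ Set.Ioo a b, deriv lam s ≠ 0) ∧
      (∀ s ∈ Set.Ioo a b,
        50 * lam s * deriv (deriv lam) s - 84 * deriv lam s ^ 2
          + 230 * lam s ^ 4 - 5 * R * lam s ^ 2 - 45 * c * lam s ^ 2 = 0) ∧
      (∀ s ∈ Set.Ioo a b,
        -15 * lam s * deriv (deriv (deriv lam)) s
          + 36 * deriv lam s * deriv (deriv lam) s
          - 273 * lam s ^ 3 * deriv lam s - 7 * R * lam s * deriv lam s
          + 77 * c * lam s * deriv lam s = 0) := by
  rintro ⟨a, b, L, hab, hsm, hLne, hL1ne, he1, he2⟩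
  have hIo : IsOpen (Set.Ioo a b) := isOpen_Ioo
  set L1 := deriv L with hL1def
  set L2 := deriv L1 with hL2def
  set L3 := deriv L2 with hL3def
  have h1 : ContDiffOn ℝ (⊤ : ℕ∞) L1 (Set.Ioo a b) := hsm.deriv_of_isOpen hIo (by simp)
  have h2 : ContDiffOn ℝ (⊤ : ℕ∞) L2 (Set.Ioo a b) := h1.deriv_of_isOpen hIo (by simp)
  have hd : ∀ s ∈ Set.Ioo a b, HasDerivAt L (L1 s) s := fun s hs =>
    ((hsm.differentiableOn (by simp)).differentiableAt (hIo.mem_nhds hs)).hasDerivAt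
  have hd1 : ∀ s ∈ Set.Ioo a b, HasDerivAt L1 (L2 s) s := fun s hs =>
    ((h1.differentiableOn (by simp)).differentiableAt (hIo.mem_nhds hs)).hasDerivAt
  have hd2 : ∀ s ∈ Set.Ioo a b, HasDerivAt L2 (L3 s) s := fun s hs =>
    ((h2.differentiableOn (by simp)).differentiableAt (hIo.mem_nhds hs)).hasDerivAt
  -- Step A: formula for L2
  have key2 : ∀ s ∈ Set.Ioo a b,
      L2 s = -5 * L s ^ 3 + (50 * R - 250 * c) / 3 * L s := by
    intro s hs
    have hL := hd s hs
    have hL1 := hd1 s hs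
    have hL2 := hd2 s hs
    have hF : HasDerivAt (fun t => 50 * L t * L2 t - 84 * L1 t ^ 2
        + 230 * L t ^ 4 - 5 * R * L t ^ 2 - 45 * c * L t ^ 2)
        (50 * (L1 s * L2 s + L s * L3 s) - 84 * (2 * L1 s * L2 s)
          + 230 * (4 * L s ^ 3 * L1 s) - 5 * R * (2 * L s * L1 s)
          - 45 * c * (2 * L s * L1 s)) s := by
      have hA := ((hL.mul hL2).const_mul (50 : ℝ))
      have hB := ((hL1.pow 2).const_mul (84 : ℝ))
      have hC := ((hL.pow 4).const_mul (230 : ℝ))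
      have hD := ((hL.pow 2).const_mul (5 * R))
      have hE := ((hL.pow 2).const_mul (45 * c))
      have : HasDerivAt (F := ℝ) (fun t => 50 * (L t * L2 t) - 84 * L1 t ^ 2 + 230 * L t ^ 4 - 5 * R * L t ^ 2 - 45 * c * L t ^ 2) _ s := (((hA.sub hB).add hC).sub hD).sub hE
      convert this using 1
      · ext t; ring
      · ring
    have h0 : deriv (fun t => 50 * L t * L2 t - 84 * L1 t ^ 2
        + 230 * L t ^ 4 - 5 * R * L t ^ 2 - 45 * c * L t ^ 2) s = 0 :=
      deriv_eq_zero_of_ev (Filter.eventuallyEq_of_mem (hIo.mem_nhds hs) fun t ht => he1 t ht)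
    have hD0 : 50 * (L1 s * L2 s + L s * L3 s) - 84 * (2 * L1 s * L2 s)
          + 230 * (4 * L s ^ 3 * L1 s) - 5 * R * (2 * L s * L1 s)
          - 45 * c * (2 * L s * L1 s) = 0 := by
      rw [← hF.deriv]; exact h0
    have heq2 := he2 s hs
    have hfac : L1 s * (6 * L2 s + 30 * L s ^ 3 - 100 * R * L s + 500 * c * L s) = 0 := by
      linear_combination 3 * hD0 + 10 * heq2
    have h6 : 6 * L2 s + 30 * L s ^ 3 - 100 * R * L s + 500 * c * L s = 0 :=
      (mul_eq_zero.1 hfac).resolve_left (hL1ne s hs)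
    linarith
  -- Step B: first integral
  have key3 : ∀ s ∈ Set.Ioo a b,
      84 * L1 s ^ 2 + 20 * L s ^ 4 - (2485 * R - 12635 * c) / 3 * L s ^ 2 = 0 := by
    intro s hs
    linear_combination 50 * L s * (key2 s hs) - (he1 s hs)
  -- Step C: L^2 is constant on the interval
  have key4 : ∀ s ∈ Set.Ioo a b, L s ^ 2 = (3430 * R - 16730 * c) / 2280 := by
    intro s hs
    have hL := hd s hs
    have hL1 := hd1 s hs
    have hG : HasDerivAt (fun t => 84 * L1 t ^ 2 + 20 * L t ^ 4
        - (2485 * R - 12635 * c) / 3 * L t ^ 2)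
        (84 * (2 * L1 s * L2 s) + 20 * (4 * L s ^ 3 * L1 s)
          - (2485 * R - 12635 * c) / 3 * (2 * L s * L1 s)) s := by
      have hA := ((hL1.pow 2).const_mul (84 : ℝ))
      have hB := ((hL.pow 4).const_mul (20 : ℝ))
      have hC := ((hL.pow 2).const_mul ((2485 * R - 12635 * c) / 3))
      have : HasDerivAt (F := ℝ) (fun t => 84 * L1 t ^ 2 + 20 * L t ^ 4 - (2485 * R - 12635 * c) / 3 * L t ^ 2) _ s := (hA.add hB).sub hC
      convert this using 1
      · ring
    have h0 : deriv (fun t => 84 * L1 t ^ 2 + 20 * L t ^ 4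
        - (2485 * R - 12635 * c) / 3 * L t ^ 2) s = 0 :=
      deriv_eq_zero_of_ev (Filter.eventuallyEq_of_mem (hIo.mem_nhds hs) fun t ht => key3 t ht)
    have hD0 : 84 * (2 * L1 s * L2 s) + 20 * (4 * L s ^ 3 * L1 s)
          - (2485 * R - 12635 * c) / 3 * (2 * L s * L1 s) = 0 := by
      rw [← hG.deriv]; exact h0
    have hsub := key2 s hs
    have hfac : L1 s * (L s * (2280 * L s ^ 2 - (3430 * R - 16730 * c))) = 0 := by
      linear_combination (-3) * hD0 + 504 * L1 s * hsub
    have h6 : 2280 * L s ^ 2 - (3430 * R - 16730 * c) = 0 := by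
      rcases mul_eq_zero.1 hfac with h | h
      · exact absurd h (hL1ne s hs)
      · rcases mul_eq_zero.1 h with h' | h'
        · exact absurd h' (hLne s hs)
        · exact h'
    linarith
  -- Final contradiction at the midpoint
  have hs0 : (a + b) / 2 ∈ Set.Ioo a b := ⟨by linarith, by linarith⟩
  have hL := hd _ hs0
  have hH : HasDerivAt (fun t => L t ^ 2) (2 * L ((a + b) / 2) * L1 ((a + b) / 2))
      ((a + b) / 2) := by
    have : HasDerivAt (F := ℝ) (fun t => L t ^ 2) _ ((a + b) / 2) := hL.pow 2
    convert this using 1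
    push_cast
    ring
  have h0 : deriv (fun t => L t ^ 2) ((a + b) / 2) = 0 :=
    deriv_eq_zero_of_ev (Filter.eventuallyEq_of_mem (hIo.mem_nhds hs0) fun t ht => key4 t ht)
  have : 2 * L ((a + b) / 2) * L1 ((a + b) / 2) = 0 := by rw [← hH.deriv]; exact h0
  rcases mul_eq_zero.1 this with h | h
  · rcases mul_eq_zero.1 h with h' | h'
    · norm_num at h'
    · exact hLne _ hs0 h'
  · exact hL1ne _ hs0 h
end

section
/- Let λ, λ₂, c, R be real numbers satisfying 6λ² + 6λλ₂ + 2λ₂² - 6c + R = 0 and 3λ₂⁶ + 27λλ₂⁵ + (99λ² - 4c)λ₂⁴ + (189λ³ - 24cλ)λ₂³ + (196λ⁴ - 55cλ²)λ₂² + (102λ⁵ - 57cλ³)λ₂ + 24λ⁶ - 20cλ⁴ = 0. Then 24λ⁶ + (176c - 28R)λ⁴ + (196cR - 18R² - 528c²)λ² - 3R³ + 46cR² - 228c²R + 360c³ = 0. -/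
/-- Equation (Tn312) in the proof of Theorem 1.1 (Case 2). -/
theorem stmt_11 (lam lam2 c R : ℝ)
    (h1 : 6 * lam ^ 2 + 6 * lam * lam2 + 2 * lam2 ^ 2 - 6 * c + R = 0)
    (h2 : 3 * lam2 ^ 6 + 27 * lam * lam2 ^ 5 + (99 * lam ^ 2 - 4 * c) * lam2 ^ 4
        + (189 * lam ^ 3 - 24 * c * lam) * lam2 ^ 3
        + (196 * lam ^ 4 - 55 * c * lam ^ 2) * lam2 ^ 2
        + (102 * lam ^ 5 - 57 * c * lam ^ 3) * lam2
        + 24 * lam ^ 6 - 20 * c * lam ^ 4 = 0) :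
    24 * lam ^ 6 + (176 * c - 28 * R) * lam ^ 4
      + (196 * c * R - 18 * R ^ 2 - 528 * c ^ 2) * lam ^ 2
      - 3 * R ^ 3 + 46 * c * R ^ 2 - 228 * c ^ 2 * R + 360 * c ^ 3 = 0 := by
  linear_combination
    (-3 * R ^ 2 + 28 * c * R - 60 * c ^ 2 + 6 * lam2 ^ 2 * R - 20 * lam2 ^ 2 * c
      - 12 * lam2 ^ 4 + 18 * lam * lam2 * R - 60 * lam * lam2 * c - 72 * lam * lam2 ^ 3
      + 28 * lam ^ 2 * c - 144 * lam ^ 2 * lam2 ^ 2 - 108 * lam ^ 3 * lam2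
      - 28 * lam ^ 4) * h1 + 8 * h2
end

section
/- Let I ⊆ ℝ be a nonempty open interval, c, R real constants, and α, β, λ : I → ℝ differentiable functions satisfying on I: α' = λ(α² + 1) + αβ; β' = λαβ + β² + c; λ' = (R/3 - 4c - 2λ²)α + 2λβ; and 6β² - 12λαβ + (6λ² + R - 12c)α² + 6λ² + R - 6c = 0. Then on all of I: 6β³ - 18λαβ² + (18λ² + 12c - R)α²β + 6(λ² + c)β + (3R - 6λ² - 36c)λα³ + (3R - 6λ² - 42c)λα = 0. -/
/-- Case 3.1 of the proof of Theorem 1.3: differentiating (R6) along e₁ using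
(R2), (R3), (R7) yields equation (R8). -/
theorem stmt_14 (c R : ℝ) (a b : ℝ) (hab : a < b) (α β lam : ℝ → ℝ)
    (hα : DifferentiableOn ℝ α (Set.Ioo a b))
    (hβ : DifferentiableOn ℝ β (Set.Ioo a b))
    (hlam : DifferentiableOn ℝ lam (Set.Ioo a b))
    (hR2 : ∀ s ∈ Set.Ioo a b,
      deriv α s = lam s * (α s ^ 2 + 1) + α s * β s)
    (hR3 : ∀ s ∈ Set.Ioo a b,
      deriv β s = lam s * α s * β s + β s ^ 2 + c)
    (hR7 : ∀ s ∈ Set.Ioo a b,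
      deriv lam s = (R / 3 - 4 * c - 2 * lam s ^ 2) * α s + 2 * lam s * β s)
    (hR6 : ∀ s ∈ Set.Ioo a b,
      6 * β s ^ 2 - 12 * lam s * α s * β s
        + (6 * lam s ^ 2 + R - 12 * c) * α s ^ 2
        + 6 * lam s ^ 2 + R - 6 * c = 0) :
    ∀ s ∈ Set.Ioo a b,
      6 * β s ^ 3 - 18 * lam s * α s * β s ^ 2
        + (18 * lam s ^ 2 + 12 * c - R) * α s ^ 2 * β s
        + 6 * (lam s ^ 2 + c) * β s
        + (3 * R - 6 * lam s ^ 2 - 36 * c) * lam s * α s ^ 3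
        + (3 * R - 6 * lam s ^ 2 - 42 * c) * lam s * α s = 0 := by
  intro s hs
  have ho : IsOpen (Set.Ioo a b) := isOpen_Ioo
  have hmem : Set.Ioo a b ∈ nhds s := ho.mem_nhds hs
  have hA : HasDerivAt α (lam s * (α s ^ 2 + 1) + α s * β s) s := by
    rw [← hR2 s hs]; exact ((hα s hs).differentiableAt hmem).hasDerivAt
  have hB : HasDerivAt β (lam s * α s * β s + β s ^ 2 + c) s := by
    rw [← hR3 s hs]; exact ((hβ s hs).differentiableAt hmem).hasDerivAt
  have hL : HasDerivAt lam ((R / 3 - 4 * c - 2 * lam s ^ 2) * α s + 2 * lam s * β s) s := by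
    rw [← hR7 s hs]; exact ((hlam s hs).differentiableAt hmem).hasDerivAt
  set A' := lam s * (α s ^ 2 + 1) + α s * β s with hA'
  set B' := lam s * α s * β s + β s ^ 2 + c with hB'
  set L' := (R / 3 - 4 * c - 2 * lam s ^ 2) * α s + 2 * lam s * β s with hL'
  have hF : HasDerivAt (fun t => 6 * (β t * β t) - 12 * (lam t * α t * β t)
      + 6 * (lam t * lam t * (α t * α t)) + R * (α t * α t) - 12 * c * (α t * α t)
      + (6 * (lam t * lam t) + (R - 6 * c)))
      ((6 : ℝ) * (B' * β s + β s * B')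
        - 12 * ((L' * α s + lam s * A') * β s + lam s * α s * B')
        + 6 * ((L' * lam s + lam s * L') * (α s * α s)
            + lam s * lam s * (A' * α s + α s * A'))
        + R * (A' * α s + α s * A')
        - 12 * c * (A' * α s + α s * A')
        + 6 * (L' * lam s + lam s * L')) s :=
    ((((((hB.mul hB).const_mul 6).sub
      (((hL.mul hA).mul hB).const_mul 12)).add
      (((hL.mul hL).mul (hA.mul hA)).const_mul 6)).add
      ((hA.mul hA).const_mul R)).sub
      ((hA.mul hA).const_mul (12 * c))).add
      (((hL.mul hL).const_mul 6).add_const (R - 6 * c))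
  have hF0 : HasDerivAt (fun t => 6 * (β t * β t) - 12 * (lam t * α t * β t)
      + 6 * (lam t * lam t * (α t * α t)) + R * (α t * α t) - 12 * c * (α t * α t)
      + (6 * (lam t * lam t) + (R - 6 * c))) 0 s := by
    have heq : (fun t => 6 * (β t * β t) - 12 * (lam t * α t * β t)
        + 6 * (lam t * lam t * (α t * α t)) + R * (α t * α t) - 12 * c * (α t * α t)
        + (6 * (lam t * lam t) + (R - 6 * c))) =ᶠ[nhds s] fun _ => (0 : ℝ) := by
      filter_upwards [hmem] with t ht
      have h6 := hR6 t ht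
      ring_nf
      ring_nf at h6
      linarith
    exact (hasDerivAt_const s (0 : ℝ)).congr_of_eventuallyEq heq
  have hE := hF.unique hF0
  rw [hA', hB', hL'] at hE
  linear_combination hE / 2
end

section
/- Let α, β, λ, c, R be real numbers satisfying 6β² - 12λαβ + (6λ² + R - 12c)α² + 6λ² + R - 6c = 0 and 6β³ - 18λαβ² + (18λ² + 12c - R)α²β + 6(λ² + c)β + (3R - 6λ² - 36c)λα³ + (3R - 6λ² - 42c)λα = 0. Then (R - 12c)·((2α² + 1)β - 4α³λ - 4αλ) = 0. -/
/-- Equation (S1) in Case 3.1 of the proof of Theorem 1.3. -/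
theorem stmt_15 (α β lam c R : ℝ)
    (hR6 : 6 * β ^ 2 - 12 * lam * α * β + (6 * lam ^ 2 + R - 12 * c) * α ^ 2
        + 6 * lam ^ 2 + R - 6 * c = 0)
    (hR8 : 6 * β ^ 3 - 18 * lam * α * β ^ 2 + (18 * lam ^ 2 + 12 * c - R) * α ^ 2 * β
        + 6 * (lam ^ 2 + c) * β + (3 * R - 6 * lam ^ 2 - 36 * c) * lam * α ^ 3
        + (3 * R - 6 * lam ^ 2 - 42 * c) * lam * α = 0) :
    (R - 12 * c) * ((2 * α ^ 2 + 1) * β - 4 * α ^ 3 * lam - 4 * α * lam) = 0 := by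
  linear_combination (β - lam * α) * hR6 - hR8
end

section
/- Let I ⊆ ℝ be a nonempty open interval, c, R real constants, and T, λ : I → ℝ smooth functions with λ(s) ≠ 0 for all s ∈ I, satisfying on I: (LM1) -T''' + 4TT'' + 3(T')² - (6T² - 26λ² + 10c)T' + T⁴ - (26λ² - 10c)T² + 55λλ'T - 21λλ'' - 12(λ')² + 27λ⁴ + (3R - 72c)λ² + 9c² = 0, and (LM2) -T'''' + (10T' + 10T² + 50λ² - 10c)T'' - (20T³ + 20λ²T + 20cT - 155λλ')T' + 4T⁵ + (40c - 80λ²)T³ + 120λλ'T² + (11λλ'' + 7(λ')² - 84λ⁴ - 48cλ² + 36c²)T - 33λλ''' - 45λ'λ'' + (408λ² + 10R - 252c)λλ' = 0. Then on all of I: -6λT'' + (18λT - 12λ')T' - 6λT³ + 12λ'T² + (48λ³ - 10λ'' + 3Rλ - 60cλ)T + 3λ''' + (27c - R - 75λ²)λ' = 0. -/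
/-- From the proof of Lemma 4.2: eliminating T'''' and T''' from (LM1), (LM2)
yields equation (LM3). -/
theorem stmt_17 (c R : ℝ) (a b : ℝ) (hab : a < b) (T lam : ℝ → ℝ)
    (hT : ContDiffOn ℝ (⊤ : ℕ∞) T (Set.Ioo a b))
    (hlam : ContDiffOn ℝ (⊤ : ℕ∞) lam (Set.Ioo a b))
    (hlam0 : ∀ s ∈ Set.Ioo a b, lam s ≠ 0)
    (hLM1 : ∀ s ∈ Set.Ioo a b,
      -deriv (deriv (deriv T)) s + 4 * T s * deriv (deriv T) s + 3 * deriv T s ^ 2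
        - (6 * T s ^ 2 - 26 * lam s ^ 2 + 10 * c) * deriv T s
        + T s ^ 4 - (26 * lam s ^ 2 - 10 * c) * T s ^ 2
        + 55 * lam s * deriv lam s * T s
        - 21 * lam s * deriv (deriv lam) s - 12 * deriv lam s ^ 2
        + 27 * lam s ^ 4 + (3 * R - 72 * c) * lam s ^ 2 + 9 * c ^ 2 = 0)
    (hLM2 : ∀ s ∈ Set.Ioo a b,
      -deriv (deriv (deriv (deriv T))) s
        + (10 * deriv T s + 10 * T s ^ 2 + 50 * lam s ^ 2 - 10 * c) * deriv (deriv T) s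
        - (20 * T s ^ 3 + 20 * lam s ^ 2 * T s + 20 * c * T s
            - 155 * lam s * deriv lam s) * deriv T s
        + 4 * T s ^ 5 + (40 * c - 80 * lam s ^ 2) * T s ^ 3
        + 120 * lam s * deriv lam s * T s ^ 2
        + (11 * lam s * deriv (deriv lam) s + 7 * deriv lam s ^ 2
            - 84 * lam s ^ 4 - 48 * c * lam s ^ 2 + 36 * c ^ 2) * T s
        - 33 * lam s * deriv (deriv (deriv lam)) s
        - 45 * deriv lam s * deriv (deriv lam) s
        + (408 * lam s ^ 2 + 10 * R - 252 * c) * lam s * deriv lam s = 0) :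
    ∀ s ∈ Set.Ioo a b,
      -6 * lam s * deriv (deriv T) s
        + (18 * lam s * T s - 12 * deriv lam s) * deriv T s
        - 6 * lam s * T s ^ 3 + 12 * deriv lam s * T s ^ 2
        + (48 * lam s ^ 3 - 10 * deriv (deriv lam) s + 3 * R * lam s
            - 60 * c * lam s) * T s
        + 3 * deriv (deriv (deriv lam)) s
        + (27 * c - R - 75 * lam s ^ 2) * deriv lam s = 0 := by
  intro s hs
  have hsO : IsOpen (Set.Ioo a b) := isOpen_Ioo
  have hmem : Set.Ioo a b ∈ nhds s := hsO.mem_nhds hs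
  -- smoothness of iterated derivatives on the open interval
  have hT1 : ContDiffOn ℝ (⊤ : ℕ∞) (deriv T) (Set.Ioo a b) := hT.deriv_of_isOpen hsO (by simp)
  have hT2 : ContDiffOn ℝ (⊤ : ℕ∞) (deriv (deriv T)) (Set.Ioo a b) := hT1.deriv_of_isOpen hsO (by simp)
  have hT3 : ContDiffOn ℝ (⊤ : ℕ∞) (deriv (deriv (deriv T))) (Set.Ioo a b) :=
    hT2.deriv_of_isOpen hsO (by simp)
  have hL1 : ContDiffOn ℝ (⊤ : ℕ∞) (deriv lam) (Set.Ioo a b) := hlam.deriv_of_isOpen hsO (by simp)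
  have hL2 : ContDiffOn ℝ (⊤ : ℕ∞) (deriv (deriv lam)) (Set.Ioo a b) := hL1.deriv_of_isOpen hsO (by simp)
  -- pointwise HasDerivAt facts
  have dT0 : HasDerivAt T (deriv T s) s :=
    ((hT.contDiffAt hmem).differentiableAt (by simp)).hasDerivAt
  have dT1 : HasDerivAt (deriv T) (deriv (deriv T) s) s :=
    ((hT1.contDiffAt hmem).differentiableAt (by simp)).hasDerivAt
  have dT2 : HasDerivAt (deriv (deriv T)) (deriv (deriv (deriv T)) s) s :=
    ((hT2.contDiffAt hmem).differentiableAt (by simp)).hasDerivAt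
  have dT3 : HasDerivAt (deriv (deriv (deriv T))) (deriv (deriv (deriv (deriv T))) s) s :=
    ((hT3.contDiffAt hmem).differentiableAt (by simp)).hasDerivAt
  have dL0 : HasDerivAt lam (deriv lam s) s :=
    ((hlam.contDiffAt hmem).differentiableAt (by simp)).hasDerivAt
  have dL1 : HasDerivAt (deriv lam) (deriv (deriv lam) s) s :=
    ((hL1.contDiffAt hmem).differentiableAt (by simp)).hasDerivAt
  have dL2 : HasDerivAt (deriv (deriv lam)) (deriv (deriv (deriv lam)) s) s :=
    ((hL2.contDiffAt hmem).differentiableAt (by simp)).hasDerivAt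
  -- the function given by the LHS of (LM1)
  set g : ℝ → ℝ := fun x =>
      -deriv (deriv (deriv T)) x + 4 * T x * deriv (deriv T) x + 3 * deriv T x ^ 2
        - (6 * T x ^ 2 - 26 * lam x ^ 2 + 10 * c) * deriv T x
        + T x ^ 4 - (26 * lam x ^ 2 - 10 * c) * T x ^ 2
        + 55 * lam x * deriv lam x * T x
        - 21 * lam x * deriv (deriv lam) x - 12 * deriv lam x ^ 2
        + 27 * lam x ^ 4 + (3 * R - 72 * c) * lam x ^ 2 + 9 * c ^ 2 with hg
  -- g has a derivative at s, given by differentiating term by term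
  have Hg : HasDerivAt g
      (-45 * deriv lam s * deriv (deriv lam) s
        + -21 * lam s * deriv (deriv (deriv lam)) s
        + 6 * lam s * deriv lam s * R + -144 * lam s * deriv lam s * c
        + 108 * lam s ^ 3 * deriv lam s
        + -1 * deriv (deriv (deriv (deriv T))) s
        + -10 * deriv (deriv T) s * c + 26 * deriv (deriv T) s * lam s ^ 2
        + 107 * deriv T s * lam s * deriv lam s
        + 10 * deriv T s * deriv (deriv T) s
        + 55 * T s * deriv lam s ^ 2 + 55 * T s * lam s * deriv (deriv lam) s
        + 4 * T s * deriv (deriv (deriv T)) s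
        + 20 * T s * deriv T s * c + -52 * T s * deriv T s * lam s ^ 2
        + -12 * T s * deriv T s ^ 2
        + -52 * T s ^ 2 * lam s * deriv lam s + -6 * T s ^ 2 * deriv (deriv T) s
        + 4 * T s ^ 3 * deriv T s) s := by
    have a1 := dT3.neg
    have a2 := (dT0.const_mul (4:ℝ)).mul dT2
    have a3 := (dT1.pow 2).const_mul (3:ℝ)
    have a4 := ((((dT0.pow 2).const_mul (6:ℝ)).sub ((dL0.pow 2).const_mul (26:ℝ))).add_const (10*c)).mul dT1
    have a5 := dT0.pow 4
    have a6 := (((dL0.pow 2).const_mul (26:ℝ)).sub_const (10*c)).mul (dT0.pow 2)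
    have a7 := ((dL0.const_mul (55:ℝ)).mul dL1).mul dT0
    have a8 := (dL0.const_mul (21:ℝ)).mul dL2
    have a9 := (dL1.pow 2).const_mul (12:ℝ)
    have a10 := (dL0.pow 4).const_mul (27:ℝ)
    have a11 := (dL0.pow 2).const_mul (3*R-72*c)
    have H := (((((((((((a1.add a2).add a3).sub a4).add a5).sub a6).add a7).sub a8).sub a9).add a10).add a11).add_const (9*c^2))
    refine HasDerivAt.congr_deriv H ?_
    push_cast
    simp only [Pi.pow_apply, Pi.mul_apply, Pi.sub_apply, Pi.add_apply, Pi.neg_apply]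
    ring
  -- g vanishes near s, hence its derivative at s is 0
  have hgev : g =ᶠ[nhds s] fun _ => (0 : ℝ) :=
    Filter.eventuallyEq_of_mem hmem fun x hx => hLM1 x hx
  have hD0 : deriv g s = 0 := by
    rw [hgev.deriv_eq]; simp
  have hD := Hg.deriv
  rw [hD0] at hD
  -- the algebraic elimination
  have key : (4 * lam s) *
      (-6 * lam s * deriv (deriv T) s
        + (18 * lam s * T s - 12 * deriv lam s) * deriv T s
        - 6 * lam s * T s ^ 3 + 12 * deriv lam s * T s ^ 2
        + (48 * lam s ^ 3 - 10 * deriv (deriv lam) s + 3 * R * lam s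
            - 60 * c * lam s) * T s
        + 3 * deriv (deriv (deriv lam)) s
        + (27 * c - R - 75 * lam s ^ 2) * deriv lam s) = 0 := by
    linear_combination (-1 : ℝ) * hD + 4 * T s * (hLM1 s hs) - (hLM2 s hs)
  exact (mul_eq_zero.mp key).resolve_left
    (mul_ne_zero (by norm_num) (hlam0 s hs))
end

section
/- Let c and R be real constants. There is no smooth function λ : I → ℝ on a nonempty open interval I ⊆ ℝ with λ(s) ≠ 0 and λ'(s) ≠ 0 for all s ∈ I that satisfies on all of I the two equations: (CE1) 36(λ')² - 22λλ'' - 108λ⁴ + 3Rλ² = 0 and (CE2) 30λ'λ'' - 13λλ''' + 93cλλ' - 255λ³λ' - 5Rλλ' = 0. (Indeed, these two equations force 96λ² - 121R + 1302c = 0, hence λ constant, contradicting λ' ≠ 0.) -/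
/-- If a function vanishes on an open interval and has a derivative at an interior
point, that derivative is zero. -/
lemma stmt_18_aux {a b : ℝ} {f : ℝ → ℝ} {d s : ℝ} (hs : s ∈ Set.Ioo a b)
    (hf : ∀ x ∈ Set.Ioo a b, f x = 0) (h : HasDerivAt f d s) : d = 0 := by
  have hev : f =ᶠ[nhds s] (fun _ => (0 : ℝ)) :=
    Filter.eventuallyEq_of_mem (Ioo_mem_nhds hs.1 hs.2) hf
  have h0 : HasDerivAt (fun _ : ℝ => (0 : ℝ)) d s := h.congr_of_eventuallyEq hev.symm
  exact ((hasDerivAt_const s (0 : ℝ)).unique h0).symm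

/-- Case 1.2 of the proof of Lemma 4.2: the system a₁ = 0, a₂ = 0 has no nonvanishing
solution with nowhere-zero derivative. -/
theorem stmt_18 (c R : ℝ) :
    ¬ ∃ (a b : ℝ) (lam : ℝ → ℝ), a < b ∧
      ContDiffOn ℝ (⊤ : ℕ∞) lam (Set.Ioo a b) ∧
      (∀ s ∈ Set.Ioo a b, lam s ≠ 0) ∧
      (∀ s ∈ Set.Ioo a b, deriv lam s ≠ 0) ∧
      (∀ s ∈ Set.Ioo a b,
        36 * deriv lam s ^ 2 - 22 * lam s * deriv (deriv lam) s
          - 108 * lam s ^ 4 + 3 * R * lam s ^ 2 = 0) ∧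
      (∀ s ∈ Set.Ioo a b,
        30 * deriv lam s * deriv (deriv lam) s
          - 13 * lam s * deriv (deriv (deriv lam)) s
          + 93 * c * lam s * deriv lam s - 255 * lam s ^ 3 * deriv lam s
          - 5 * R * lam s * deriv lam s = 0) := by
  rintro ⟨a, b, lam, hab, hsm, hne, hdne, hCE1, hCE2⟩
  have hIopen : IsOpen (Set.Ioo a b) := isOpen_Ioo
  have h1 : ContDiffOn ℝ (⊤ : ℕ∞) (deriv lam) (Set.Ioo a b) := hsm.deriv_of_isOpen hIopen (by simp)
  have h2 : ContDiffOn ℝ (⊤ : ℕ∞) (deriv (deriv lam)) (Set.Ioo a b) :=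
    h1.deriv_of_isOpen hIopen (by simp)
  have hL : ∀ s ∈ Set.Ioo a b, HasDerivAt lam (deriv lam s) s := fun s hs =>
    (((hsm.differentiableOn (by simp)).differentiableAt (hIopen.mem_nhds hs))).hasDerivAt
  have hL1 : ∀ s ∈ Set.Ioo a b, HasDerivAt (deriv lam) (deriv (deriv lam) s) s := fun s hs =>
    (((h1.differentiableOn (by simp)).differentiableAt (hIopen.mem_nhds hs))).hasDerivAt
  have hL2 : ∀ s ∈ Set.Ioo a b,
      HasDerivAt (deriv (deriv lam)) (deriv (deriv (deriv lam)) s) s := fun s hs =>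
    (((h2.differentiableOn (by simp)).differentiableAt (hIopen.mem_nhds hs))).hasDerivAt
  -- key relation obtained by eliminating λ''' between CE1' and CE2
  have key : ∀ s ∈ Set.Ioo a b,
      10 * deriv (deriv lam) s + 6 * lam s ^ 3 - 188 * R * lam s + 2046 * c * lam s = 0 := by
    intro s hs
    have hD1 : HasDerivAt
        (fun x => 36 * deriv lam x ^ 2 - 22 * lam x * deriv (deriv lam) x
          - 108 * lam x ^ 4 + 3 * R * lam x ^ 2)
        (36 * (2 * deriv lam s ^ 1 * deriv (deriv lam) s)
          - ((22 * deriv lam s) * deriv (deriv lam) s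
              + (22 * lam s) * deriv (deriv (deriv lam)) s)
          - 108 * (4 * lam s ^ 3 * deriv lam s)
          + 3 * R * (2 * lam s ^ 1 * deriv lam s)) s := by
      have t1 := ((hL1 s hs).pow 2).const_mul (36 : ℝ)
      have t2 := ((hL s hs).const_mul (22 : ℝ)).mul (hL2 s hs)
      have t3 := ((hL s hs).pow 4).const_mul (108 : ℝ)
      have t4 := ((hL s hs).pow 2).const_mul (3 * R)
      exact ((t1.sub t2).sub t3).add t4
    have hd1 := stmt_18_aux hs (fun x hx => by simpa using hCE1 x hx) hD1
    have hfac : deriv lam s *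
        (10 * deriv (deriv lam) s + 6 * lam s ^ 3 - 188 * R * lam s + 2046 * c * lam s) = 0 := by
      linear_combination (-13 : ℝ) * hd1 + 22 * hCE2 s hs
    exact (mul_eq_zero.mp hfac).resolve_left (hdne s hs)
  -- substitute back into CE1
  have e4 : ∀ s ∈ Set.Ioo a b,
      180 * deriv lam s ^ 2 - 474 * lam s ^ 4 - 2053 * R * lam s ^ 2
        + 22506 * c * lam s ^ 2 = 0 := fun s hs => by
    linear_combination 5 * hCE1 s hs + 11 * lam s * key s hs
  -- hence 96 λ² - 121 R + 1302 c = 0 on I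
  have e7 : ∀ s ∈ Set.Ioo a b, 96 * lam s ^ 2 - 121 * R + 1302 * c = 0 := by
    intro s hs
    have hD2 : HasDerivAt
        (fun x => 180 * deriv lam x ^ 2 - 474 * lam x ^ 4 - 2053 * R * lam x ^ 2
          + 22506 * c * lam x ^ 2)
        (180 * (2 * deriv lam s ^ 1 * deriv (deriv lam) s)
          - 474 * (4 * lam s ^ 3 * deriv lam s)
          - 2053 * R * (2 * lam s ^ 1 * deriv lam s)
          + 22506 * c * (2 * lam s ^ 1 * deriv lam s)) s := by
      have t1 := ((hL1 s hs).pow 2).const_mul (180 : ℝ)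
      have t2 := ((hL s hs).pow 4).const_mul (474 : ℝ)
      have t3 := ((hL s hs).pow 2).const_mul (2053 * R)
      have t4 := ((hL s hs).pow 2).const_mul (22506 * c)
      exact ((t1.sub t2).sub t3).add t4
    have hd2 := stmt_18_aux hs (fun x hx => by simpa using e4 x hx) hD2
    have hfac2 : deriv lam s * (360 * deriv (deriv lam) s - 1896 * lam s ^ 3
        - 4106 * R * lam s + 45012 * c * lam s) = 0 := by
      linear_combination hd2
    have h6 := (mul_eq_zero.mp hfac2).resolve_left (hdne s hs)
    have hfac3 : lam s * (96 * lam s ^ 2 - 121 * R + 1302 * c) = 0 := by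
      linear_combination (-(1 : ℝ)/22) * h6 + ((36 : ℝ)/22) * key s hs
    exact (mul_eq_zero.mp hfac3).resolve_left (hne s hs)
  -- differentiating this constant relation gives λ λ' = 0, contradiction
  have hs0 : (a + b) / 2 ∈ Set.Ioo a b := ⟨by linarith, by linarith⟩
  set s0 := (a + b) / 2
  have hD3 : HasDerivAt (fun x => 96 * lam x ^ 2 - 121 * R + 1302 * c)
      (96 * (2 * lam s0 ^ 1 * deriv lam s0)) s0 := by
    have t1 := ((hL s0 hs0).pow 2).const_mul (96 : ℝ)
    simpa using (t1.sub_const (121 * R)).add_const (1302 * c)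
  have hd3 := stmt_18_aux hs0 (fun x hx => by simpa using e7 x hx) hD3
  exact mul_ne_zero (hne s0 hs0) (hdne s0 hs0) (by linear_combination (1/192 : ℝ) * hd3)
end
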